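/- arXiv:math/0602061 — 2 statements merged into one kernel-verified Lean document; each statement's English description precedes it below -/
import Mathlib

section
/- For every weighted digraph Γ, the matrix J̄ᵀ·J̄ + L·Lᵀ is nonsingular and the matrix X = Lᵀ·(J̄ᵀ·J̄ + L·Lᵀ)^{−1} is the Moore–Penrose generalized inverse of the Kirchhoff matrix L: it satisfies LXL = L, XLX = X, (LX)ᵀ = LX, and (XL)ᵀ = XL. -/
open Matrix BigOperators Filter

/-- An out forest of the weighted digraph with arc-weight matrix `ε`:
a set of arcs (pairs with positive weight), every vertex has at most one
incoming arc, and there is no directed cycle. -/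
def IsOutForest {n : ℕ} (ε : Fin n → Fin n → ℝ) (F : Finset (Fin n × Fin n)) : Prop :=
  (∀ p ∈ F, 0 < ε p.1 p.2) ∧
  (∀ u u' v : Fin n, (u, v) ∈ F → (u', v) ∈ F → u = u') ∧
  ¬ ∃ (k : ℕ) (f : ℕ → Fin n), 0 < k ∧ f 0 = f k ∧ ∀ i < k, (f i, f (i + 1)) ∈ F

/-- The weight of a forest: the product of the weights of its arcs. -/
noncomputable def forestWeight {n : ℕ} (ε : Fin n → Fin n → ℝ)
    (F : Finset (Fin n × Fin n)) : ℝ :=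
  ∏ p ∈ F, ε p.1 p.2

/-- `σ_k`: the total weight of the out forests with exactly `k` arcs. -/
noncomputable def sigmaW {n : ℕ} (ε : Fin n → Fin n → ℝ) (k : ℕ) : ℝ :=
  ∑ᶠ F ∈ {F : Finset (Fin n × Fin n) | IsOutForest ε F ∧ F.card = k}, forestWeight ε F

/-- `Q_k`: the matrix whose `(i,j)` entry is the total weight of out forests with `k`
arcs in which `j` has no incoming arc and `i` is reachable from `j` along arcs of `F`. -/
noncomputable def QMat {n : ℕ} (ε : Fin n → Fin n → ℝ) (k : ℕ) :
    Matrix (Fin n) (Fin n) ℝ :=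
  Matrix.of fun i j =>
    ∑ᶠ F ∈ {F : Finset (Fin n × Fin n) | IsOutForest ε F ∧ F.card = k ∧
        (∀ u, (u, j) ∉ F) ∧ Relation.ReflTransGen (fun a b => (a, b) ∈ F) j i},
      forestWeight ε F

/-- `n − v`: the maximum number of arcs in an out forest. -/
noncomputable def maxForestCard {n : ℕ} (ε : Fin n → Fin n → ℝ) : ℕ :=
  sSup {k | ∃ F : Finset (Fin n × Fin n), IsOutForest ε F ∧ F.card = k}

/-- The Kirchhoff matrix: `l i j = -ε j i` for `j ≠ i`, `l i i = Σ_{k ≠ i} ε k i`. -/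
noncomputable def kirchhoff {n : ℕ} (ε : Fin n → Fin n → ℝ) : Matrix (Fin n) (Fin n) ℝ :=
  Matrix.of fun i j =>
    if i = j then ∑ k ∈ Finset.univ.filter (· ≠ i), ε k i else -(ε j i)

/-- The normalized matrix of maximum out forests `J̄ = σ_{n−v}⁻¹ Q_{n−v}`. -/
noncomputable def Jbar {n : ℕ} (ε : Fin n → Fin n → ℝ) : Matrix (Fin n) (Fin n) ℝ :=
  (sigmaW ε (maxForestCard ε))⁻¹ • QMat ε (maxForestCard ε)

namespace ForestProof

variable {n : ℕ}

def rel (F : Finset (Fin n × Fin n)) : Fin n → Fin n → Prop := fun a b => (a, b) ∈ F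

abbrev rst (F : Finset (Fin n × Fin n)) : Fin n → Fin n → Prop := Relation.ReflTransGen (rel F)
abbrev tg (F : Finset (Fin n × Fin n)) : Fin n → Fin n → Prop := Relation.TransGen (rel F)

def UniqIn (F : Finset (Fin n × Fin n)) : Prop :=
  ∀ u u' v : Fin n, (u, v) ∈ F → (u', v) ∈ F → u = u'

def Acyc (F : Finset (Fin n × Fin n)) : Prop := ∀ v, ¬ tg F v v

lemma rst_mono {F G : Finset (Fin n × Fin n)} (h : F ⊆ G) {a b} (hab : rst F a b) :
    rst G a b :=
  Relation.ReflTransGen.mono (r := rel F) (p := rel G) (fun _ _ hxy => h hxy) _ _ hab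

lemma tg_mono {F G : Finset (Fin n × Fin n)} (h : F ⊆ G) {a b} (hab : tg F a b) :
    tg G a b :=
  Relation.TransGen.mono (r := rel F) (p := rel G) (fun _ _ hxy => h hxy) _ _ hab

lemma acyc_anti {F G : Finset (Fin n × Fin n)} (h : F ⊆ G) (hG : Acyc G) : Acyc F :=
  fun v hv => hG v (tg_mono h hv)

lemma uniqIn_anti {F G : Finset (Fin n × Fin n)} (h : F ⊆ G) (hG : UniqIn G) : UniqIn F :=
  fun u u' v h1 h2 => hG u u' v (h h1) (h h2)

lemma not_loop {F : Finset (Fin n × Fin n)} (ha : Acyc F) (a : Fin n) : (a, a) ∉ F :=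
  fun h => ha a (Relation.TransGen.single h)

lemma chain_of_tg {F : Finset (Fin n × Fin n)} {a b} (h : tg F a b) :
    ∃ (k : ℕ) (f : ℕ → Fin n), 0 < k ∧ f 0 = a ∧ f k = b ∧ ∀ i < k, (f i, f (i + 1)) ∈ F := by
  induction h with
  | @single c hc =>
    refine ⟨1, fun i => if i = 0 then a else c, one_pos, by simp, by simp, ?_⟩
    intro i hi
    interval_cases i
    simpa [rel] using hc
  | @tail c d h1 h2 ih =>
    obtain ⟨k, f, hk, h0, hkb, hstep⟩ := ih
    refine ⟨k + 1, fun i => if i ≤ k then f i else d, by omega, by simp [h0], by simp, ?_⟩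
    intro i hi
    rcases Nat.lt_or_ge i k with h | h
    · simpa [Nat.le_of_lt h, Nat.succ_le_of_lt h] using hstep i h
    · have hik : i = k := by omega
      subst hik
      simp only [le_refl, if_pos, if_neg (Nat.not_succ_le_self i), hkb]
      exact h2
  
lemma tg_of_chain {F : Finset (Fin n × Fin n)} {k : ℕ} {f : ℕ → Fin n} (hk : 0 < k)
    (hstep : ∀ i < k, (f i, f (i + 1)) ∈ F) : tg F (f 0) (f k) := by
  induction k with
  | zero => omega
  | succ m ih =>
    rcases Nat.eq_zero_or_pos m with rfl | hm
    · exact Relation.TransGen.single (hstep 0 (by omega))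
    · exact (ih hm (fun i hi => hstep i (by omega))).tail (hstep m (by omega))

lemma acyc_iff_no_chain {F : Finset (Fin n × Fin n)} :
    (¬ ∃ (k : ℕ) (f : ℕ → Fin n), 0 < k ∧ f 0 = f k ∧ ∀ i < k, (f i, f (i + 1)) ∈ F) ↔
      Acyc F := by
  constructor
  · intro h v hv
    obtain ⟨k, f, hk, h0, hkb, hstep⟩ := chain_of_tg hv
    exact h ⟨k, f, hk, by rw [h0, hkb], hstep⟩
  · rintro h ⟨k, f, hk, h0, hstep⟩
    have := tg_of_chain hk hstep
    rw [← h0] at this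
    exact h (f 0) this

lemma isOutForest_iff {ε : Fin n → Fin n → ℝ} {F : Finset (Fin n × Fin n)} :
    IsOutForest ε F ↔ (∀ p ∈ F, 0 < ε p.1 p.2) ∧ UniqIn F ∧ Acyc F := by
  unfold IsOutForest UniqIn
  rw [acyc_iff_no_chain]

lemma last_arc {F : Finset (Fin n × Fin n)} (hu : UniqIn F) {a b c : Fin n}
    (h : rst F a b) (hne : a ≠ b) (hc : (c, b) ∈ F) : rst F a c := by
  rcases h.cases_tail with heq | ⟨d, hd, hdb⟩
  · exact absurd heq.symm hne
  · rwa [hu d c b hdb hc] at hd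

lemma comparable {F : Finset (Fin n × Fin n)} (hu : UniqIn F) {a i : Fin n}
    (hai : rst F a i) : ∀ b, rst F b i → rst F a b ∨ rst F b a := by
  induction hai with
  | refl => exact fun b hb => Or.inr hb
  | @tail c i' h1 h2 ih =>
    intro b hbi
    rcases hbi.cases_tail with heq | ⟨d, hbd, hdi⟩
    · subst heq
      exact Or.inl (h1.tail h2)
    · have hdc : d = c := hu d c i' hdi h2
      subst hdc
      exact ih b hbd

lemma unique_child {F : Finset (Fin n × Fin n)} (hu : UniqIn F) (ha : Acyc F)
    {j s s' u : Fin n} (h1 : (j, s) ∈ F) (h2 : (j, s') ∈ F) (h3 : rst F s u)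
    (h4 : rst F s' u) : s = s' := by
  by_contra hne
  rcases comparable hu h3 s' h4 with h | h
  · have hsj : rst F s j := last_arc hu h hne h2
    exact ha j (Relation.TransGen.head' h1 hsj)
  · have hs'j : rst F s' j := last_arc hu h (Ne.symm hne) h1
    exact ha j (Relation.TransGen.head' h2 hs'j)

lemma rst_insert_decomp {E : Finset (Fin n × Fin n)} {x y a b : Fin n}
    (h : rst (insert (x, y) E) a b) :
    rst E a b ∨ (rst (insert (x, y) E) a x ∧ rst E y b) := by
  induction h with
  | refl => exact Or.inl Relation.ReflTransGen.refl
  | @tail c d h1 h2 ih =>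
    rcases Finset.mem_insert.mp h2 with heq | hmem
    · cases heq
      exact Or.inr ⟨h1, Relation.ReflTransGen.refl⟩
    · rcases ih with h | ⟨ha', hb⟩
      · exact Or.inl (h.tail hmem)
      · exact Or.inr ⟨ha', hb.tail hmem⟩

lemma tg_insert_decomp {E : Finset (Fin n × Fin n)} {x y a b : Fin n}
    (h : tg (insert (x, y) E) a b) :
    tg E a b ∨ (rst (insert (x, y) E) a x ∧ rst E y b) := by
  induction h with
  | @single c hc =>
    rcases Finset.mem_insert.mp hc with heq | hmem
    · cases heq
      exact Or.inr ⟨Relation.ReflTransGen.refl, Relation.ReflTransGen.refl⟩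
    · exact Or.inl (Relation.TransGen.single hmem)
  | @tail c d h1 h2 ih =>
    rcases Finset.mem_insert.mp h2 with heq | hmem
    · cases heq
      exact Or.inr ⟨h1.to_reflTransGen, Relation.ReflTransGen.refl⟩
    · rcases ih with h | ⟨ha', hb⟩
      · exact Or.inl (h.tail hmem)
      · exact Or.inr ⟨ha', hb.tail hmem⟩

lemma acyc_insert {E : Finset (Fin n × Fin n)} {x y : Fin n} (hE : Acyc E)
    (h : ¬ rst E y x) : Acyc (insert (x, y) E) := by
  intro v hv
  rcases tg_insert_decomp hv with hc | ⟨h1, h2⟩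
  · exact hE v hc
  · rcases rst_insert_decomp h1 with h3 | ⟨_, h4⟩
    · exact h (h2.trans h3)
    · exact h h4

lemma rst_erase_of_not_rst_target {F : Finset (Fin n × Fin n)} {c a x b : Fin n}
    (h : rst F x b) (hna : ¬ rst F x a) : rst (F.erase (c, a)) x b := by
  induction h with
  | refl => exact Relation.ReflTransGen.refl
  | @tail d b' h1 h2 ih =>
    have hne : (d, b') ≠ (c, a) := by
      intro he
      have hba : b' = a := congrArg Prod.snd he
      exact hna (hba ▸ h1.tail h2)
    exact ih.tail (Finset.mem_erase.mpr ⟨hne, h2⟩)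

lemma rst_erase_in_arc_of_source {F : Finset (Fin n × Fin n)} (ha : Acyc F)
    {a b c : Fin n} (h : rst F a b) : rst (F.erase (c, a)) a b := by
  rcases h.cases_head with heq | ⟨s, hs, hsb⟩
  · exact heq ▸ Relation.ReflTransGen.refl
  · have h1 : ¬ rst F s a := fun hsa => ha a (Relation.TransGen.head' hs hsa)
    have hne : (a, s) ≠ (c, a) := by
      intro he
      have hsa : s = a := congrArg Prod.snd he
      exact h1 (hsa ▸ Relation.ReflTransGen.refl)
    exact Relation.ReflTransGen.head (Finset.mem_erase.mpr ⟨hne, hs⟩)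
      (rst_erase_of_not_rst_target hsb h1)

lemma rst_erase_out_arc {G : Finset (Fin n × Fin n)} {u j x : Fin n} :
    ∀ {b}, rst G x b → ¬ rst G j b → rst (G.erase (u, j)) x b := by
  intro b h
  induction h with
  | refl => exact fun _ => Relation.ReflTransGen.refl
  | @tail d b' h1 h2 ih =>
    intro hnj
    have hne : (d, b') ≠ (u, j) := by
      intro he
      have hbj : b' = j := congrArg Prod.snd he
      exact hnj (hbj ▸ Relation.ReflTransGen.refl)
    exact (ih (fun hjd => hnj (hjd.tail h2))).tail (Finset.mem_erase.mpr ⟨hne, h2⟩)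

lemma rst_erase_child {F : Finset (Fin n × Fin n)} (hu : UniqIn F) (ha : Acyc F)
    {j s i : Fin n} (hjs : (j, s) ∈ F) (h : rst F j i) (hns : ¬ rst F s i) :
    rst (F.erase (j, s)) j i := by
  rcases h.cases_head with heq | ⟨s', hs', hs'i⟩
  · exact heq ▸ Relation.ReflTransGen.refl
  · have hne : s' ≠ s := fun he => hns (he ▸ hs'i)
    have hn's : ¬ rst F s' s := by
      intro h'
      exact ha j (Relation.TransGen.head' hs' (last_arc hu h' hne hjs))
    exact Relation.ReflTransGen.head
      (Finset.mem_erase.mpr ⟨fun he => hne (Prod.ext_iff.mp he).2, hs'⟩)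
      (rst_erase_of_not_rst_target hs'i hn's)

lemma not_rst_erase_child_to {F : Finset (Fin n × Fin n)} (hu : UniqIn F) (ha : Acyc F)
    {j s u : Fin n} (hjs : (j, s) ∈ F) (hsu : rst F s u) (hju : j ≠ u) :
    ¬ rst (F.erase (j, s)) j u := by
  intro h
  rcases h.cases_head with heq | ⟨s', hs', hs'u⟩
  · exact hju heq
  · have h1 : (j, s') ∈ F := (Finset.mem_erase.mp hs').2
    have h2 : s' ≠ s := fun he => (Finset.mem_erase.mp hs').1 (by rw [he])
    have h3 : rst F s' u := rst_mono (Finset.erase_subset _ _) hs'u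
    exact h2 (unique_child hu ha h1 hjs h3 hsu)

lemma rst_empty {a b : Fin n} (h : rst (∅ : Finset (Fin n × Fin n)) a b) : a = b := by
  induction h with
  | refl => rfl
  | @tail c d _ h2 _ => exact absurd h2 (Finset.notMem_empty _)

end ForestProof

-- appended to stage1 content for testing
namespace ForestProof

open scoped Classical

variable {n : ℕ}

noncomputable def forestSet (ε : Fin n → Fin n → ℝ) (k : ℕ) :
    Finset (Finset (Fin n × Fin n)) :=
  (Set.toFinite {F : Finset (Fin n × Fin n) | IsOutForest ε F ∧ F.card = k}).toFinset

lemma mem_forestSet {ε : Fin n → Fin n → ℝ} {k : ℕ} {F : Finset (Fin n × Fin n)} :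
    F ∈ forestSet ε k ↔ IsOutForest ε F ∧ F.card = k := by
  simp [forestSet]

noncomputable def QSet (ε : Fin n → Fin n → ℝ) (k : ℕ) (i j : Fin n) :
    Finset (Finset (Fin n × Fin n)) :=
  (Set.toFinite {F : Finset (Fin n × Fin n) | IsOutForest ε F ∧ F.card = k ∧
      (∀ u, (u, j) ∉ F) ∧ Relation.ReflTransGen (fun a b => (a, b) ∈ F) j i}).toFinset

lemma mem_QSet {ε : Fin n → Fin n → ℝ} {k : ℕ} {i j : Fin n} {F : Finset (Fin n × Fin n)} :
    F ∈ QSet ε k i j ↔ IsOutForest ε F ∧ F.card = k ∧ (∀ u, (u, j) ∉ F) ∧ rst F j i := by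
  rw [QSet, Set.Finite.mem_toFinset, Set.mem_setOf_eq]
  exact Iff.rfl

lemma sigmaW_eq (ε : Fin n → Fin n → ℝ) (k : ℕ) :
    sigmaW ε k = ∑ F ∈ forestSet ε k, forestWeight ε F := by
  have h : {F : Finset (Fin n × Fin n) | IsOutForest ε F ∧ F.card = k} =
      ↑(forestSet ε k) := by simp [forestSet]
  rw [sigmaW, h, finsum_mem_coe_finset]

lemma QMat_eq (ε : Fin n → Fin n → ℝ) (k : ℕ) (i j : Fin n) :
    QMat ε k i j = ∑ F ∈ QSet ε k i j, forestWeight ε F := by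
  have h : {F : Finset (Fin n × Fin n) | IsOutForest ε F ∧ F.card = k ∧
      (∀ u, (u, j) ∉ F) ∧ Relation.ReflTransGen (fun a b => (a, b) ∈ F) j i} =
      ↑(QSet ε k i j) := by simp [QSet]
  rw [QMat, Matrix.of_apply, h, finsum_mem_coe_finset]

lemma acyc_empty : Acyc (∅ : Finset (Fin n × Fin n)) := by
  intro v hv
  cases hv with
  | single h => exact absurd h (Finset.notMem_empty _)
  | tail _ h => exact absurd h (Finset.notMem_empty _)

lemma empty_isOutForest (ε : Fin n → Fin n → ℝ) : IsOutForest ε (∅ : Finset (Fin n × Fin n)) := by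
  rw [isOutForest_iff]
  exact ⟨by simp, fun u u' v h => absurd h (Finset.notMem_empty _), acyc_empty⟩

lemma maxCard_bddAbove (ε : Fin n → Fin n → ℝ) :
    BddAbove {k | ∃ F : Finset (Fin n × Fin n), IsOutForest ε F ∧ F.card = k} := by
  refine ⟨Fintype.card (Fin n × Fin n), ?_⟩
  rintro k ⟨F, _, rfl⟩
  exact Finset.card_le_univ F

lemma card_le_maxForestCard {ε : Fin n → Fin n → ℝ} {F : Finset (Fin n × Fin n)}
    (hF : IsOutForest ε F) : F.card ≤ maxForestCard ε :=
  le_csSup (maxCard_bddAbove ε) ⟨F, hF, rfl⟩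

lemma exists_maxForest (ε : Fin n → Fin n → ℝ) :
    ∃ F : Finset (Fin n × Fin n), IsOutForest ε F ∧ F.card = maxForestCard ε := by
  have hne : {k | ∃ F : Finset (Fin n × Fin n), IsOutForest ε F ∧ F.card = k}.Nonempty :=
    ⟨0, ⟨∅, empty_isOutForest ε, Finset.card_empty⟩⟩
  exact Nat.sSup_mem hne (maxCard_bddAbove ε)

lemma forestSet_succ_max (ε : Fin n → Fin n → ℝ) :
    forestSet ε (maxForestCard ε + 1) = ∅ := by
  apply Finset.eq_empty_of_forall_notMem
  intro F hF
  rw [mem_forestSet] at hF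
  have := card_le_maxForestCard hF.1
  omega

lemma sigmaW_succ_max (ε : Fin n → Fin n → ℝ) : sigmaW ε (maxForestCard ε + 1) = 0 := by
  rw [sigmaW_eq, forestSet_succ_max, Finset.sum_empty]

lemma QMat_succ_max (ε : Fin n → Fin n → ℝ) : QMat ε (maxForestCard ε + 1) = 0 := by
  ext i j
  rw [QMat_eq]
  have hset : QSet ε (maxForestCard ε + 1) i j = ∅ := by
    apply Finset.eq_empty_of_forall_notMem
    intro F hF
    rw [mem_QSet] at hF
    have := card_le_maxForestCard hF.1
    omega
  rw [hset, Finset.sum_empty]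
  simp

lemma QMat_zero (ε : Fin n → Fin n → ℝ) : QMat ε 0 = 1 := by
  ext i j
  rw [QMat_eq, Matrix.one_apply]
  by_cases h : i = j
  · subst h
    have hset : QSet ε 0 i i = {∅} := by
      ext F
      rw [mem_QSet]
      simp only [Finset.card_eq_zero, Finset.mem_singleton]
      constructor
      · rintro ⟨_, h2, _, _⟩; exact h2
      · rintro rfl
        exact ⟨empty_isOutForest ε, rfl, fun u => Finset.notMem_empty _,
          Relation.ReflTransGen.refl⟩
    rw [hset, if_pos rfl, Finset.sum_singleton]
    simp [forestWeight]
  · have hset : QSet ε 0 i j = ∅ := by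
      apply Finset.eq_empty_of_forall_notMem
      intro F hF
      rw [mem_QSet] at hF
      obtain ⟨_, hc, _, hr⟩ := hF
      rw [Finset.card_eq_zero] at hc
      subst hc
      exact h (rst_empty hr).symm
    rw [hset, if_neg h, Finset.sum_empty]

lemma forestWeight_pos {ε : Fin n → Fin n → ℝ} {F : Finset (Fin n × Fin n)}
    (hF : IsOutForest ε F) : 0 < forestWeight ε F :=
  Finset.prod_pos hF.1

lemma sigmaW_max_pos (ε : Fin n → Fin n → ℝ) : 0 < sigmaW ε (maxForestCard ε) := by
  obtain ⟨F₀, hF₀, hc₀⟩ := exists_maxForest ε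
  rw [sigmaW_eq]
  have hmem : F₀ ∈ forestSet ε (maxForestCard ε) := mem_forestSet.mpr ⟨hF₀, hc₀⟩
  calc (0:ℝ) < forestWeight ε F₀ := forestWeight_pos hF₀
    _ ≤ ∑ F ∈ forestSet ε (maxForestCard ε), forestWeight ε F := by
        apply Finset.single_le_sum (fun F hF => ?_) hmem
        exact le_of_lt (forestWeight_pos (mem_forestSet.mp hF).1)

lemma sigmaW_zero (ε : Fin n → Fin n → ℝ) : sigmaW ε 0 = 1 := by
  rw [sigmaW_eq]
  have hset : forestSet ε 0 = {∅} := by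
    ext F
    rw [mem_forestSet]
    simp only [Finset.card_eq_zero, Finset.mem_singleton]
    constructor
    · rintro ⟨_, h2⟩; exact h2
    · rintro rfl; exact ⟨empty_isOutForest ε, rfl⟩
  rw [hset, Finset.sum_singleton]
  simp [forestWeight]

end ForestProof
namespace ForestProof

open scoped Classical

variable {n : ℕ} {ε : Fin n → Fin n → ℝ}

lemma pfst {α β : Type*} {a c : α} {b d : β} (h : (a, b) = (c, d)) : a = c :=
  congrArg Prod.fst h

lemma psnd {α β : Type*} {a c : α} {b d : β} (h : (a, b) = (c, d)) : b = d :=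
  congrArg Prod.snd h

lemma forest_subset {E F : Finset (Fin n × Fin n)} (h : E ⊆ F) (hF : IsOutForest ε F) :
    IsOutForest ε E := by
  rw [isOutForest_iff] at *
  exact ⟨fun p hp => hF.1 p (h hp), uniqIn_anti h hF.2.1, acyc_anti h hF.2.2⟩

lemma forest_insert {F : Finset (Fin n × Fin n)} {u j : Fin n} (hF : IsOutForest ε F)
    (hpos : 0 < ε u j) (hroot : ∀ v, (v, j) ∉ F) (hnr : ¬ rst F j u) :
    IsOutForest ε (insert (u, j) F) := by
  rw [isOutForest_iff] at *
  obtain ⟨hp, hu, ha⟩ := hF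
  refine ⟨?_, ?_, acyc_insert ha hnr⟩
  · intro p hp'
    rcases Finset.mem_insert.mp hp' with rfl | h
    · exact hpos
    · exact hp p h
  · intro a a' v h1 h2
    rcases Finset.mem_insert.mp h1 with e1 | h1' <;>
      rcases Finset.mem_insert.mp h2 with e2 | h2'
    · rw [pfst e1, pfst e2]
    · exact absurd (psnd e1 ▸ h2') (hroot a')
    · exact absurd (psnd e2 ▸ h1') (hroot a)
    · exact hu a a' v h1' h2'

noncomputable def firstChild (F : Finset (Fin n × Fin n)) (j u : Fin n) : Fin n :=
  if h : ∃ s, (j, s) ∈ F ∧ rst F s u then h.choose else j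

lemma firstChild_spec {F : Finset (Fin n × Fin n)} {j u : Fin n}
    (h : ∃ s, (j, s) ∈ F ∧ rst F s u) :
    (j, firstChild F j u) ∈ F ∧ rst F (firstChild F j u) u := by
  rw [firstChild, dif_pos h]
  exact h.choose_spec

lemma firstChild_eq {F : Finset (Fin n × Fin n)} (hu : UniqIn F) (ha : Acyc F)
    {j s u : Fin n} (h1 : (j, s) ∈ F) (h2 : rst F s u) : firstChild F j u = s := by
  obtain ⟨h3, h4⟩ := firstChild_spec ⟨s, h1, h2⟩
  exact unique_child hu ha h3 h1 h4 h2

noncomputable def parentOf (G : Finset (Fin n × Fin n)) (j : Fin n) : Fin n :=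
  if h : ∃ u, (u, j) ∈ G then h.choose else j

lemma parentOf_mem {G : Finset (Fin n × Fin n)} {j : Fin n} (h : ∃ u, (u, j) ∈ G) :
    (parentOf G j, j) ∈ G := by
  rw [parentOf, dif_pos h]
  exact h.choose_spec

lemma parentOf_eq {G : Finset (Fin n × Fin n)} (hu : UniqIn G) {u j : Fin n}
    (h : (u, j) ∈ G) : parentOf G j = u :=
  hu _ _ _ (parentOf_mem ⟨u, h⟩) h

noncomputable def rootTo (G : Finset (Fin n × Fin n)) (j i : Fin n) : Fin n :=
  if h : ∃ t, (j, t) ∈ G ∧ rst (G.erase (j, t)) t i then h.choose else j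

lemma rootTo_spec {G : Finset (Fin n × Fin n)} {j i : Fin n}
    (h : ∃ t, (j, t) ∈ G ∧ rst (G.erase (j, t)) t i) :
    (j, rootTo G j i) ∈ G ∧ rst (G.erase (j, rootTo G j i)) (rootTo G j i) i := by
  rw [rootTo, dif_pos h]
  exact h.choose_spec

lemma rootTo_eq {G : Finset (Fin n × Fin n)} (hu : UniqIn G) (ha : Acyc G)
    {j t i : Fin n} (h1 : (j, t) ∈ G) (h2 : rst (G.erase (j, t)) t i) :
    rootTo G j i = t := by
  obtain ⟨h3, h4⟩ := rootTo_spec ⟨t, h1, h2⟩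
  have ht : rst G t i := rst_mono (Finset.erase_subset _ _) h2
  have ht' : rst G (rootTo G j i) i := rst_mono (Finset.erase_subset _ _) h4
  by_contra hne
  rcases comparable hu ht' t ht with h | h
  · exact ha j (Relation.TransGen.head' h3 (last_arc hu h hne h1))
  · exact ha j (Relation.TransGen.head' h1 (last_arc hu h (Ne.symm hne) h3))

lemma weight_insert {F : Finset (Fin n × Fin n)} {p : Fin n × Fin n} (h : p ∉ F) :
    forestWeight ε (insert p F) = ε p.1 p.2 * forestWeight ε F :=
  Finset.prod_insert h

lemma weight_erase {F : Finset (Fin n × Fin n)} {p : Fin n × Fin n} (h : p ∈ F) :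
    forestWeight ε F = ε p.1 p.2 * forestWeight ε (F.erase p) :=
  (Finset.mul_prod_erase F _ h).symm

/-- Master lemma for the forward map of the cyclic-terms bijection. -/
lemma A2_master {k : ℕ} {i j u : Fin n} {F : Finset (Fin n × Fin n)}
    (hune : u ≠ j) (hF : IsOutForest ε F) (hcard : F.card = k)
    (hroot : ∀ v, (v, j) ∉ F) (hji : rst F j i) (hpos : 0 < ε u j)
    (hreach : rst F j u) :
    ∃ s, firstChild F j u = s ∧ (j, s) ∈ F ∧
      IsOutForest ε (insert (u, j) (F.erase (j, s))) ∧
      (insert (u, j) (F.erase (j, s))).card = k ∧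
      (∀ v, (v, s) ∉ insert (u, j) (F.erase (j, s))) ∧
      rst (insert (u, j) (F.erase (j, s))) s i ∧ s ≠ j ∧ 0 < ε j s ∧
      rst (insert (u, j) (F.erase (j, s))) s j ∧
      parentOf (insert (u, j) (F.erase (j, s))) j = u ∧
      insert (j, s) ((insert (u, j) (F.erase (j, s))).erase (u, j)) = F ∧
      ε u j * forestWeight ε F = ε j s * forestWeight ε (insert (u, j) (F.erase (j, s))) := by
  obtain ⟨hpF, huF, haF⟩ := isOutForest_iff.mp hF
  -- the first arc on the path from j to u
  have hex : ∃ s, (j, s) ∈ F ∧ rst F s u := by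
    rcases hreach.cases_head with heq | ⟨s₀, h1, h2⟩
    · exact absurd heq.symm hune
    · exact ⟨s₀, h1, h2⟩
  obtain ⟨hs1, hs2⟩ := firstChild_spec hex
  set s := firstChild F j u with hsdef
  have hsj : s ≠ j := by
    intro h
    exact not_loop haF j (h ▸ hs1)
  have hnotmem : (u, j) ∉ F.erase (j, s) := fun hm => hroot u (Finset.mem_of_mem_erase hm)
  have hEf : IsOutForest ε (F.erase (j, s)) := forest_subset (Finset.erase_subset _ _) hF
  have hrootE : ∀ v, (v, j) ∉ F.erase (j, s) := fun v hv => hroot v (Finset.mem_of_mem_erase hv)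
  have hnr : ¬ rst (F.erase (j, s)) j u := not_rst_erase_child_to huF haF hs1 hs2 (Ne.symm hune)
  have hGf : IsOutForest ε (insert (u, j) (F.erase (j, s))) := forest_insert hEf hpos hrootE hnr
  obtain ⟨hpG, huG, haG⟩ := isOutForest_iff.mp hGf
  have hFpos : 0 < F.card := Finset.card_pos.mpr ⟨_, hs1⟩
  have hcardG : (insert (u, j) (F.erase (j, s))).card = k := by
    rw [Finset.card_insert_of_notMem hnotmem, Finset.card_erase_of_mem hs1]
    omega
  have hrootG : ∀ v, (v, s) ∉ insert (u, j) (F.erase (j, s)) := by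
    intro v hv
    rcases Finset.mem_insert.mp hv with e | hm
    · exact hsj (psnd e)
    · have hvF : (v, s) ∈ F := Finset.mem_of_mem_erase hm
      have : v = j := huF v j s hvF hs1
      subst this
      exact Finset.notMem_erase _ _ hm
  have hGsu : rst (insert (u, j) (F.erase (j, s))) s u :=
    rst_mono (Finset.subset_insert _ _) (rst_erase_in_arc_of_source haF hs2)
  have hGsj : rst (insert (u, j) (F.erase (j, s))) s j :=
    hGsu.tail (Finset.mem_insert_self _ _)
  have hGsi : rst (insert (u, j) (F.erase (j, s))) s i := by
    by_cases hsi : rst F s i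
    · exact rst_mono (Finset.subset_insert _ _) (rst_erase_in_arc_of_source haF hsi)
    · exact hGsj.trans (rst_mono (Finset.subset_insert _ _)
        (rst_erase_child huF haF hs1 hji hsi))
  have hpar : parentOf (insert (u, j) (F.erase (j, s))) j = u :=
    parentOf_eq huG (Finset.mem_insert_self _ _)
  have hrec : insert (j, s) ((insert (u, j) (F.erase (j, s))).erase (u, j)) = F := by
    rw [Finset.erase_insert hnotmem, Finset.insert_erase hs1]
  have hwt : ε u j * forestWeight ε F
      = ε j s * forestWeight ε (insert (u, j) (F.erase (j, s))) := by
    have w1 : forestWeight ε (insert (u, j) (F.erase (j, s)))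
        = ε u j * forestWeight ε (F.erase (j, s)) := weight_insert hnotmem
    have w2 : forestWeight ε F = ε j s * forestWeight ε (F.erase (j, s)) := weight_erase hs1
    rw [w1, w2]
    ring
  exact ⟨s, rfl, hs1, hGf, hcardG, hrootG, hGsi, hsj, hpF _ hs1, hGsj, hpar, hrec, hwt⟩

/-- Master lemma for the backward map of the cyclic-terms bijection. -/
lemma B2_master {k : ℕ} {i j t : Fin n} {G : Finset (Fin n × Fin n)}
    (htne : t ≠ j) (hG : IsOutForest ε G) (hcard : G.card = k)
    (hroot : ∀ v, (v, t) ∉ G) (hti : rst G t i) (hpos : 0 < ε j t)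
    (hreach : rst G t j) :
    ∃ u, parentOf G j = u ∧ (u, j) ∈ G ∧ u ≠ j ∧ 0 < ε u j ∧
      IsOutForest ε (insert (j, t) (G.erase (u, j))) ∧
      (insert (j, t) (G.erase (u, j))).card = k ∧
      (∀ v, (v, j) ∉ insert (j, t) (G.erase (u, j))) ∧
      rst (insert (j, t) (G.erase (u, j))) j i ∧
      rst (insert (j, t) (G.erase (u, j))) j u ∧
      firstChild (insert (j, t) (G.erase (u, j))) j u = t ∧
      insert (u, j) ((insert (j, t) (G.erase (u, j))).erase (j, t)) = G ∧
      ε j t * forestWeight ε G = ε u j * forestWeight ε (insert (j, t) (G.erase (u, j))) := by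
  obtain ⟨hpG, huG, haG⟩ := isOutForest_iff.mp hG
  have hex : ∃ u, (u, j) ∈ G := by
    rcases hreach.cases_tail with heq | ⟨d, _, hdj⟩
    · exact absurd heq.symm htne
    · exact ⟨d, hdj⟩
  have huj : (parentOf G j, j) ∈ G := parentOf_mem hex
  set u := parentOf G j with hudef
  have hune : u ≠ j := by
    intro h
    exact not_loop haG j (h ▸ huj)
  have hposu : 0 < ε u j := hpG _ huj
  have hjtG : (j, t) ∉ G := hroot j
  have hjtE : (j, t) ∉ G.erase (u, j) := fun hm => hjtG (Finset.mem_of_mem_erase hm)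
  have hEf : IsOutForest ε (G.erase (u, j)) := forest_subset (Finset.erase_subset _ _) hG
  have hrootE : ∀ v, (v, t) ∉ G.erase (u, j) := fun v hv => hroot v (Finset.mem_of_mem_erase hv)
  have hnrE : ¬ rst (G.erase (u, j)) t j := by
    intro h
    rcases h.cases_tail with heq | ⟨d', _, hdj'⟩
    · exact htne heq.symm
    · have hd : d' = u := huG d' u j (Finset.mem_of_mem_erase hdj') huj
      exact Finset.notMem_erase _ _ (hd ▸ hdj')
  have hFf : IsOutForest ε (insert (j, t) (G.erase (u, j))) := forest_insert hEf hpos hrootE hnrE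
  obtain ⟨hpF, huF, haF⟩ := isOutForest_iff.mp hFf
  have hGpos : 0 < G.card := Finset.card_pos.mpr ⟨_, huj⟩
  have hcardF : (insert (j, t) (G.erase (u, j))).card = k := by
    rw [Finset.card_insert_of_notMem hjtE, Finset.card_erase_of_mem huj]
    omega
  have hrootF : ∀ v, (v, j) ∉ insert (j, t) (G.erase (u, j)) := by
    intro v hv
    rcases Finset.mem_insert.mp hv with e | hm
    · exact htne (psnd e).symm
    · have hvG : (v, j) ∈ G := Finset.mem_of_mem_erase hm
      have : v = u := huG v u j hvG huj
      subst this
      exact Finset.notMem_erase _ _ hm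
  have hGtu : rst G t u := last_arc huG hreach htne huj
  have hnju : ¬ rst G j u := fun h => haG u (Relation.TransGen.head' huj h)
  have hEtu : rst (G.erase (u, j)) t u := rst_erase_out_arc hGtu hnju
  have hFtu : rst (insert (j, t) (G.erase (u, j))) t u :=
    rst_mono (Finset.subset_insert _ _) hEtu
  have hFju : rst (insert (j, t) (G.erase (u, j))) j u :=
    Relation.ReflTransGen.head (Finset.mem_insert_self _ _) hFtu
  have hFji : rst (insert (j, t) (G.erase (u, j))) j i := by
    by_cases hji' : rst G j i
    · exact rst_mono (Finset.subset_insert _ _) (rst_erase_in_arc_of_source haG hji')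
    · exact Relation.ReflTransGen.head (Finset.mem_insert_self _ _)
        (rst_mono (Finset.subset_insert _ _) (rst_erase_out_arc hti hji'))
  have hfc : firstChild (insert (j, t) (G.erase (u, j))) j u = t :=
    firstChild_eq huF haF (Finset.mem_insert_self _ _) hFtu
  have hrec : insert (u, j) ((insert (j, t) (G.erase (u, j))).erase (j, t)) = G := by
    rw [Finset.erase_insert hjtE, Finset.insert_erase huj]
  have hwt : ε j t * forestWeight ε G
      = ε u j * forestWeight ε (insert (j, t) (G.erase (u, j))) := by
    have w1 : forestWeight ε (insert (j, t) (G.erase (u, j)))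
        = ε j t * forestWeight ε (G.erase (u, j)) := weight_insert hjtE
    have w2 : forestWeight ε G = ε u j * forestWeight ε (G.erase (u, j)) := weight_erase huj
    rw [w1, w2]
    ring
  exact ⟨u, rfl, huj, hune, hposu, hFf, hcardF, hrootF, hFji, hFju, hfc, hrec, hwt⟩

/-- Master lemma for the forward map of the acyclic A-terms bijection. -/
lemma A1_master {k : ℕ} {i j u : Fin n} {F : Finset (Fin n × Fin n)}
    (hune : u ≠ j) (hF : IsOutForest ε F) (hcard : F.card = k)
    (hroot : ∀ v, (v, j) ∉ F) (hji : rst F j i) (hpos : 0 < ε u j)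
    (hnreach : ¬ rst F j u) :
    IsOutForest ε (insert (u, j) F) ∧ (insert (u, j) F).card = k + 1 ∧
      (∃ v, (v, j) ∈ insert (u, j) F) ∧ rst (insert (u, j) F) j i ∧
      parentOf (insert (u, j) F) j = u ∧ (insert (u, j) F).erase (u, j) = F ∧
      forestWeight ε (insert (u, j) F) = ε u j * forestWeight ε F := by
  have hGf : IsOutForest ε (insert (u, j) F) := forest_insert hF hpos hroot hnreach
  obtain ⟨_, huG, _⟩ := isOutForest_iff.mp hGf
  have hnm : (u, j) ∉ F := hroot u
  refine ⟨hGf, by rw [Finset.card_insert_of_notMem hnm, hcard], ⟨u, Finset.mem_insert_self _ _⟩,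
    rst_mono (Finset.subset_insert _ _) hji, parentOf_eq huG (Finset.mem_insert_self _ _),
    Finset.erase_insert hnm, weight_insert hnm⟩

/-- Master lemma for the backward map of the acyclic A-terms bijection. -/
lemma T1_master {k : ℕ} {i j : Fin n} {G : Finset (Fin n × Fin n)}
    (hG : IsOutForest ε G) (hcard : G.card = k + 1)
    (hex : ∃ v, (v, j) ∈ G) (hji : rst G j i) :
    ∃ u, parentOf G j = u ∧ (u, j) ∈ G ∧ u ≠ j ∧ 0 < ε u j ∧
      IsOutForest ε (G.erase (u, j)) ∧ (G.erase (u, j)).card = k ∧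
      (∀ v, (v, j) ∉ G.erase (u, j)) ∧ rst (G.erase (u, j)) j i ∧
      ¬ rst (G.erase (u, j)) j u ∧ insert (u, j) (G.erase (u, j)) = G ∧
      forestWeight ε G = ε u j * forestWeight ε (G.erase (u, j)) := by
  obtain ⟨hpG, huG, haG⟩ := isOutForest_iff.mp hG
  have huj : (parentOf G j, j) ∈ G := parentOf_mem hex
  set u := parentOf G j with hudef
  have hune : u ≠ j := fun h => not_loop haG j (h ▸ huj)
  refine ⟨u, rfl, huj, hune, hpG _ huj, forest_subset (Finset.erase_subset _ _) hG, ?_, ?_, ?_,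
    ?_, Finset.insert_erase huj, weight_erase huj⟩
  · rw [Finset.card_erase_of_mem huj, hcard]
    omega
  · intro v hv
    have : v = u := huG v u j (Finset.mem_of_mem_erase hv) huj
    exact Finset.notMem_erase _ _ (this ▸ hv)
  · exact rst_erase_in_arc_of_source haG hji
  · intro h
    exact haG u (Relation.TransGen.head' huj (rst_mono (Finset.erase_subset _ _) h))

/-- Master lemma for the forward map of the acyclic B-terms bijection. -/
lemma B1_master {k : ℕ} {i j t : Fin n} {G : Finset (Fin n × Fin n)}
    (htne : t ≠ j) (hG : IsOutForest ε G) (hcard : G.card = k)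
    (hroot : ∀ v, (v, t) ∉ G) (hti : rst G t i) (hpos : 0 < ε j t)
    (hnreach : ¬ rst G t j) :
    IsOutForest ε (insert (j, t) G) ∧ (insert (j, t) G).card = k + 1 ∧
      rst (insert (j, t) G) j i ∧ rootTo (insert (j, t) G) j i = t ∧
      (insert (j, t) G).erase (j, t) = G ∧
      forestWeight ε (insert (j, t) G) = ε j t * forestWeight ε G := by
  have hGf : IsOutForest ε (insert (j, t) G) := forest_insert hG hpos hroot hnreach
  obtain ⟨_, huG, haG⟩ := isOutForest_iff.mp hGf
  have hnm : (j, t) ∉ G := hroot j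
  have herase : (insert (j, t) G).erase (j, t) = G := Finset.erase_insert hnm
  have hji : rst (insert (j, t) G) j i :=
    Relation.ReflTransGen.head (Finset.mem_insert_self _ _)
      (rst_mono (Finset.subset_insert _ _) hti)
  have hrt : rootTo (insert (j, t) G) j i = t := by
    apply rootTo_eq huG haG (Finset.mem_insert_self _ _)
    rw [herase]
    exact hti
  exact ⟨hGf, by rw [Finset.card_insert_of_notMem hnm, hcard], hji, hrt, herase,
    weight_insert hnm⟩

/-- Master lemma for the backward map of the acyclic B-terms bijection. -/
lemma R1_master {k : ℕ} {i j : Fin n} (hij : i ≠ j) {G : Finset (Fin n × Fin n)}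
    (hG : IsOutForest ε G) (hcard : G.card = k + 1) (hji : rst G j i) :
    ∃ t, rootTo G j i = t ∧ (j, t) ∈ G ∧ t ≠ j ∧ 0 < ε j t ∧
      IsOutForest ε (G.erase (j, t)) ∧ (G.erase (j, t)).card = k ∧
      (∀ v, (v, t) ∉ G.erase (j, t)) ∧ rst (G.erase (j, t)) t i ∧
      ¬ rst (G.erase (j, t)) t j ∧ insert (j, t) (G.erase (j, t)) = G ∧
      forestWeight ε G = ε j t * forestWeight ε (G.erase (j, t)) := by
  obtain ⟨hpG, huG, haG⟩ := isOutForest_iff.mp hG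
  have hex : ∃ t, (j, t) ∈ G ∧ rst (G.erase (j, t)) t i := by
    rcases hji.cases_head with heq | ⟨t₀, h1, h2⟩
    · exact absurd heq.symm hij
    · exact ⟨t₀, h1, rst_erase_in_arc_of_source haG h2⟩
  obtain ⟨hjt, hti⟩ := rootTo_spec hex
  set t := rootTo G j i with htdef
  have htne : t ≠ j := fun h => not_loop haG j (h ▸ hjt)
  refine ⟨t, rfl, hjt, htne, hpG _ hjt, forest_subset (Finset.erase_subset _ _) hG, ?_, ?_,
    hti, ?_, Finset.insert_erase hjt, weight_erase hjt⟩
  · rw [Finset.card_erase_of_mem hjt, hcard]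
    omega
  · intro v hv
    have : v = j := huG v j t (Finset.mem_of_mem_erase hv) hjt
    exact Finset.notMem_erase _ _ (this ▸ hv)
  · intro h
    exact haG j (Relation.TransGen.head' hjt (rst_mono (Finset.erase_subset _ _) h))

end ForestProof
namespace ForestProof

open scoped Classical

variable {n : ℕ} {ε : Fin n → Fin n → ℝ}

lemma QSet_eq_filter (ε : Fin n → Fin n → ℝ) (k : ℕ) (i t : Fin n) :
    QSet ε k i t = (forestSet ε k).filter (fun F => (∀ v, (v, t) ∉ F) ∧ rst F t i) := by
  ext F
  simp only [mem_QSet, Finset.mem_filter, mem_forestSet]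
  tauto

lemma sum_prod_filter {α β γ : Type*} (s : Finset α) (t : Finset β)
    (P : α × β → Prop) [DecidablePred P] (f : α × β → γ) [AddCommMonoid γ] :
    ∑ p ∈ (s ×ˢ t).filter P, f p
      = ∑ a ∈ s, ∑ b ∈ t.filter (fun b => P (a, b)), f (a, b) := by
  rw [Finset.sum_filter, Finset.sum_product]
  exact Finset.sum_congr rfl fun a _ => (Finset.sum_filter _ _).symm

/-- Bijection between cyclic A-terms and cyclic B-terms. -/
lemma bijA2B2 (ε : Fin n → Fin n → ℝ) (k : ℕ) (i j : Fin n) :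
    ∑ p ∈ ((Finset.univ.erase j ×ˢ QSet ε k i j).filter
        (fun p => 0 < ε p.1 j)).filter (fun p => rst p.2 j p.1),
      ε p.1 j * forestWeight ε p.2
    = ∑ p ∈ ((((Finset.univ.erase j ×ˢ forestSet ε k).filter
        (fun p => (∀ v, (v, p.1) ∉ p.2) ∧ rst p.2 p.1 i)).filter
        (fun p => 0 < ε j p.1)).filter (fun p => rst p.2 p.1 j)),
      ε j p.1 * forestWeight ε p.2 := by
  refine Finset.sum_nbij'
    (fun p => (firstChild p.2 j p.1, insert (p.1, j) (p.2.erase (j, firstChild p.2 j p.1))))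
    (fun q => (parentOf q.2 j, insert (j, q.1) (q.2.erase (parentOf q.2 j, j))))
    ?_ ?_ ?_ ?_ ?_
  · rintro ⟨u, F⟩ hp
    simp only [Finset.mem_filter, Finset.mem_product, Finset.mem_erase, Finset.mem_univ,
      and_true, mem_QSet] at hp
    obtain ⟨⟨⟨hune, hF, hcard, hroot, hji⟩, hpos⟩, hreach⟩ := hp
    obtain ⟨s, hs_eq, hs1, hGf, hcardG, hrootG, hGsi, hsj, hposjs, hGsj, hpar, hrec, hwt⟩ :=
      A2_master hune hF hcard hroot hji hpos hreach
    simp only [hs_eq, Finset.mem_filter, Finset.mem_product, Finset.mem_erase, Finset.mem_univ,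
      and_true, mem_forestSet]
    exact ⟨⟨⟨⟨hsj, hGf, hcardG⟩, hrootG, hGsi⟩, hposjs⟩, hGsj⟩
  · rintro ⟨t, G⟩ hq
    simp only [Finset.mem_filter, Finset.mem_product, Finset.mem_erase, Finset.mem_univ,
      and_true, mem_forestSet] at hq
    obtain ⟨⟨⟨⟨htne, hG, hcard⟩, hroot, hti⟩, hpos⟩, hreach⟩ := hq
    obtain ⟨u, hu_eq, huj, hune, hposu, hFf, hcardF, hrootF, hFji, hFju, hfc, hrec, hwt⟩ :=
      B2_master htne hG hcard hroot hti hpos hreach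
    simp only [hu_eq, Finset.mem_filter, Finset.mem_product, Finset.mem_erase, Finset.mem_univ,
      and_true, mem_QSet]
    exact ⟨⟨⟨hune, hFf, hcardF, hrootF, hFji⟩, hposu⟩, hFju⟩
  · rintro ⟨u, F⟩ hp
    simp only [Finset.mem_filter, Finset.mem_product, Finset.mem_erase, Finset.mem_univ,
      and_true, mem_QSet] at hp
    obtain ⟨⟨⟨hune, hF, hcard, hroot, hji⟩, hpos⟩, hreach⟩ := hp
    obtain ⟨s, hs_eq, hs1, hGf, hcardG, hrootG, hGsi, hsj, hposjs, hGsj, hpar, hrec, hwt⟩ :=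
      A2_master hune hF hcard hroot hji hpos hreach
    simp only [hs_eq]
    rw [hpar, hrec]
  · rintro ⟨t, G⟩ hq
    simp only [Finset.mem_filter, Finset.mem_product, Finset.mem_erase, Finset.mem_univ,
      and_true, mem_forestSet] at hq
    obtain ⟨⟨⟨⟨htne, hG, hcard⟩, hroot, hti⟩, hpos⟩, hreach⟩ := hq
    obtain ⟨u, hu_eq, huj, hune, hposu, hFf, hcardF, hrootF, hFji, hFju, hfc, hrec, hwt⟩ :=
      B2_master htne hG hcard hroot hti hpos hreach
    simp only [hu_eq]
    rw [hfc, hrec]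
  · rintro ⟨u, F⟩ hp
    simp only [Finset.mem_filter, Finset.mem_product, Finset.mem_erase, Finset.mem_univ,
      and_true, mem_QSet] at hp
    obtain ⟨⟨⟨hune, hF, hcard, hroot, hji⟩, hpos⟩, hreach⟩ := hp
    obtain ⟨s, hs_eq, hs1, hGf, hcardG, hrootG, hGsi, hsj, hposjs, hGsj, hpar, hrec, hwt⟩ :=
      A2_master hune hF hcard hroot hji hpos hreach
    simp only [hs_eq]
    exact hwt

/-- Bijection between acyclic A-terms and `(k+1)`-forests in which `j` is not a root. -/
lemma bijA1T (ε : Fin n → Fin n → ℝ) (k : ℕ) (i j : Fin n) :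
    ∑ p ∈ ((Finset.univ.erase j ×ˢ QSet ε k i j).filter
        (fun p => 0 < ε p.1 j)).filter (fun p => ¬ rst p.2 j p.1),
      ε p.1 j * forestWeight ε p.2
    = ∑ G ∈ (forestSet ε (k + 1)).filter (fun G => (∃ v, (v, j) ∈ G) ∧ rst G j i),
      forestWeight ε G := by
  refine Finset.sum_nbij'
    (fun p => insert (p.1, j) p.2)
    (fun G => (parentOf G j, G.erase (parentOf G j, j)))
    ?_ ?_ ?_ ?_ ?_
  · rintro ⟨u, F⟩ hp
    simp only [Finset.mem_filter, Finset.mem_product, Finset.mem_erase, Finset.mem_univ,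
      and_true, mem_QSet] at hp
    obtain ⟨⟨⟨hune, hF, hcard, hroot, hji⟩, hpos⟩, hnreach⟩ := hp
    obtain ⟨hGf, hcardG, hex, hGji, hpar, herase, hwt⟩ :=
      A1_master hune hF hcard hroot hji hpos hnreach
    simp only [Finset.mem_filter, mem_forestSet]
    exact ⟨⟨hGf, hcardG⟩, hex, hGji⟩
  · intro G hG
    simp only [Finset.mem_filter, mem_forestSet] at hG
    obtain ⟨⟨hGf, hcard⟩, hex, hji⟩ := hG
    obtain ⟨u, hu_eq, huj, hune, hposu, hFf, hcardF, hrootF, hFji, hnr, hins, hwt⟩ :=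
      T1_master hGf hcard hex hji
    simp only [hu_eq, Finset.mem_filter, Finset.mem_product, Finset.mem_erase, Finset.mem_univ,
      and_true, mem_QSet]
    exact ⟨⟨⟨hune, hFf, hcardF, fun v hv => hrootF v (Finset.mem_erase.mpr hv), hFji⟩,
      hposu⟩, hnr⟩
  · rintro ⟨u, F⟩ hp
    simp only [Finset.mem_filter, Finset.mem_product, Finset.mem_erase, Finset.mem_univ,
      and_true, mem_QSet] at hp
    obtain ⟨⟨⟨hune, hF, hcard, hroot, hji⟩, hpos⟩, hnreach⟩ := hp
    obtain ⟨hGf, hcardG, hex, hGji, hpar, herase, hwt⟩ :=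
      A1_master hune hF hcard hroot hji hpos hnreach
    beta_reduce
    rw [hpar, herase]
  · intro G hG
    simp only [Finset.mem_filter, mem_forestSet] at hG
    obtain ⟨⟨hGf, hcard⟩, hex, hji⟩ := hG
    obtain ⟨u, hu_eq, huj, hune, hposu, hFf, hcardF, hrootF, hFji, hnr, hins, hwt⟩ :=
      T1_master hGf hcard hex hji
    simp only [hu_eq]
    exact hins
  · rintro ⟨u, F⟩ hp
    simp only [Finset.mem_filter, Finset.mem_product, Finset.mem_erase, Finset.mem_univ,
      and_true, mem_QSet] at hp
    obtain ⟨⟨⟨hune, hF, hcard, hroot, hji⟩, hpos⟩, hnreach⟩ := hp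
    obtain ⟨hGf, hcardG, hex, hGji, hpar, herase, hwt⟩ :=
      A1_master hune hF hcard hroot hji hpos hnreach
    exact hwt.symm

/-- Bijection between acyclic B-terms and `(k+1)`-forests from whose root `i` is reachable
(off-diagonal case). -/
lemma bijB1R (ε : Fin n → Fin n → ℝ) (k : ℕ) {i j : Fin n} (hij : i ≠ j) :
    ∑ p ∈ ((((Finset.univ.erase j ×ˢ forestSet ε k).filter
        (fun p => (∀ v, (v, p.1) ∉ p.2) ∧ rst p.2 p.1 i)).filter
        (fun p => 0 < ε j p.1)).filter (fun p => ¬ rst p.2 p.1 j)),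
      ε j p.1 * forestWeight ε p.2
    = ∑ G ∈ (forestSet ε (k + 1)).filter (fun G => rst G j i), forestWeight ε G := by
  refine Finset.sum_nbij'
    (fun p => insert (j, p.1) p.2)
    (fun G => (rootTo G j i, G.erase (j, rootTo G j i)))
    ?_ ?_ ?_ ?_ ?_
  · rintro ⟨t, G⟩ hq
    simp only [Finset.mem_filter, Finset.mem_product, Finset.mem_erase, Finset.mem_univ,
      and_true, mem_forestSet] at hq
    obtain ⟨⟨⟨⟨htne, hG, hcard⟩, hroot, hti⟩, hpos⟩, hnreach⟩ := hq
    obtain ⟨hGf, hcardG, hGji, hrt, herase, hwt⟩ :=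
      B1_master htne hG hcard hroot hti hpos hnreach
    simp only [Finset.mem_filter, mem_forestSet]
    exact ⟨⟨hGf, hcardG⟩, hGji⟩
  · intro G hG
    simp only [Finset.mem_filter, mem_forestSet] at hG
    obtain ⟨⟨hGf, hcard⟩, hji⟩ := hG
    obtain ⟨t, ht_eq, hjt, htne, hpos, hFf, hcardF, hrootF, hti, hnr, hins, hwt⟩ :=
      R1_master hij hGf hcard hji
    simp only [ht_eq, Finset.mem_filter, Finset.mem_product, Finset.mem_erase, Finset.mem_univ,
      and_true, mem_forestSet]
    exact ⟨⟨⟨⟨htne, hFf, hcardF⟩, fun v hv => hrootF v (Finset.mem_erase.mpr hv), hti⟩, hpos⟩, hnr⟩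
  · rintro ⟨t, G⟩ hq
    simp only [Finset.mem_filter, Finset.mem_product, Finset.mem_erase, Finset.mem_univ,
      and_true, mem_forestSet] at hq
    obtain ⟨⟨⟨⟨htne, hG, hcard⟩, hroot, hti⟩, hpos⟩, hnreach⟩ := hq
    obtain ⟨hGf, hcardG, hGji, hrt, herase, hwt⟩ :=
      B1_master htne hG hcard hroot hti hpos hnreach
    beta_reduce
    rw [hrt, herase]
  · intro G hG
    simp only [Finset.mem_filter, mem_forestSet] at hG
    obtain ⟨⟨hGf, hcard⟩, hji⟩ := hG
    obtain ⟨t, ht_eq, hjt, htne, hpos, hFf, hcardF, hrootF, hti, hnr, hins, hwt⟩ :=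
      R1_master hij hGf hcard hji
    simp only [ht_eq]
    exact hins
  · rintro ⟨t, G⟩ hq
    simp only [Finset.mem_filter, Finset.mem_product, Finset.mem_erase, Finset.mem_univ,
      and_true, mem_forestSet] at hq
    obtain ⟨⟨⟨⟨htne, hG, hcard⟩, hroot, hti⟩, hpos⟩, hnreach⟩ := hq
    obtain ⟨hGf, hcardG, hGji, hrt, herase, hwt⟩ :=
      B1_master htne hG hcard hroot hti hpos hnreach
    exact hwt.symm

/-- In the diagonal case the acyclic B-terms vanish. -/
lemma sumB1_diag (ε : Fin n → Fin n → ℝ) (k : ℕ) (j : Fin n) :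
    ∑ p ∈ ((((Finset.univ.erase j ×ˢ forestSet ε k).filter
        (fun p => (∀ v, (v, p.1) ∉ p.2) ∧ rst p.2 p.1 j)).filter
        (fun p => 0 < ε j p.1)).filter (fun p => ¬ rst p.2 p.1 j)),
      ε j p.1 * forestWeight ε p.2 = 0 := by
  apply Finset.sum_eq_zero
  rintro ⟨t, G⟩ hq
  simp only [Finset.mem_filter, Finset.mem_product, Finset.mem_erase, Finset.mem_univ,
    and_true, mem_forestSet] at hq
  exact absurd hq.1.1.2.2 hq.2

/-- Splitting the `(k+1)`-forests with `j ⇝ i` according to whether `j` is a root. -/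
lemma R_split (ε : Fin n → Fin n → ℝ) (k : ℕ) (i j : Fin n) :
    ∑ G ∈ (forestSet ε (k + 1)).filter (fun G => rst G j i), forestWeight ε G
      = QMat ε (k + 1) i j
        + ∑ G ∈ (forestSet ε (k + 1)).filter (fun G => (∃ v, (v, j) ∈ G) ∧ rst G j i),
            forestWeight ε G := by
  rw [QMat_eq]
  rw [← Finset.sum_filter_add_sum_filter_not
    ((forestSet ε (k + 1)).filter (fun G => rst G j i)) (fun G => ∀ v, (v, j) ∉ G)]
  congr 1
  · apply Finset.sum_congr _ (fun _ _ => rfl)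
    ext G
    simp only [Finset.mem_filter, mem_forestSet, mem_QSet]
    tauto
  · apply Finset.sum_congr _ (fun _ _ => rfl)
    ext G
    simp only [Finset.mem_filter, mem_forestSet, not_forall, not_not]
    tauto

lemma R_diag (ε : Fin n → Fin n → ℝ) (k : ℕ) (i : Fin n) :
    ∑ G ∈ (forestSet ε (k + 1)).filter (fun G => rst G i i), forestWeight ε G
      = sigmaW ε (k + 1) := by
  rw [sigmaW_eq]
  apply Finset.sum_congr _ (fun _ _ => rfl)
  apply Finset.filter_true_of_mem
  exact fun G _ => Relation.ReflTransGen.refl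

end ForestProof
namespace ForestProof

open scoped Classical

variable {n : ℕ} {ε : Fin n → Fin n → ℝ}

set_option maxHeartbeats 1600000 in
/-- The fundamental recursion `Q_k L = σ_{k+1} I − Q_{k+1}` (entrywise). -/
lemma key_entry (hnn : ∀ a b, 0 ≤ ε a b) (k : ℕ) (i j : Fin n) :
    (QMat ε k * kirchhoff ε) i j
      = sigmaW ε (k + 1) * (if i = j then 1 else 0) - QMat ε (k + 1) i j := by
  classical
  rw [Matrix.mul_apply, Finset.sum_eq_sum_sdiff_singleton_add (Finset.mem_univ j)
    (fun t => QMat ε k i t * kirchhoff ε t j), Finset.sdiff_singleton_eq_erase]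
  show (∑ t ∈ Finset.univ.erase j, QMat ε k i t * kirchhoff ε t j)
      + QMat ε k i j * kirchhoff ε j j
      = sigmaW ε (k + 1) * (if i = j then 1 else 0) - QMat ε (k + 1) i j
  -- the diagonal piece
  have eA : QMat ε k i j * kirchhoff ε j j
      = ∑ p ∈ Finset.univ.erase j ×ˢ QSet ε k i j, ε p.1 j * forestWeight ε p.2 := by
    have e1 : kirchhoff ε j j = ∑ u ∈ Finset.univ.filter (· ≠ j), ε u j := by
      simp [kirchhoff]
    have e1' : Finset.univ.filter (· ≠ j) = Finset.univ.erase j := Finset.filter_ne' _ _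
    rw [Finset.sum_product, e1, e1', QMat_eq, mul_comm, Finset.sum_mul]
    refine Finset.sum_congr rfl fun u _ => ?_
    rw [Finset.mul_sum]
  -- the off-diagonal piece
  have eB : ∑ t ∈ Finset.univ.erase j, QMat ε k i t * kirchhoff ε t j
      = -∑ p ∈ (Finset.univ.erase j ×ˢ forestSet ε k).filter
          (fun p => (∀ v, (v, p.1) ∉ p.2) ∧ rst p.2 p.1 i),
          ε j p.1 * forestWeight ε p.2 := by
    rw [sum_prod_filter, ← Finset.sum_neg_distrib]
    refine Finset.sum_congr rfl fun t ht => ?_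
    have htne : t ≠ j := (Finset.mem_erase.mp ht).1
    have e1 : kirchhoff ε t j = -(ε j t) := by simp [kirchhoff, htne]
    have e2 : (forestSet ε k).filter
        (fun F => (fun p : Fin n × Finset (Fin n × Fin n) =>
          (∀ v, (v, p.1) ∉ p.2) ∧ rst p.2 p.1 i) (t, F)) = QSet ε k i t := by
      ext F
      simp only [Finset.mem_filter, mem_QSet, mem_forestSet]
      tauto
    rw [e1, QMat_eq, e2, mul_neg]
    congr 1
    rw [mul_comm, Finset.mul_sum]
  -- splitting the A-sum
  have sA : ∑ p ∈ Finset.univ.erase j ×ˢ QSet ε k i j, ε p.1 j * forestWeight ε p.2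
      = ∑ p ∈ (Finset.univ.erase j ×ˢ QSet ε k i j).filter (fun p => 0 < ε p.1 j),
          ε p.1 j * forestWeight ε p.2
        + ∑ p ∈ (Finset.univ.erase j ×ˢ QSet ε k i j).filter (fun p => ¬ 0 < ε p.1 j),
          ε p.1 j * forestWeight ε p.2 :=
    (Finset.sum_filter_add_sum_filter_not _ _ _).symm
  have sA0 : ∑ p ∈ (Finset.univ.erase j ×ˢ QSet ε k i j).filter (fun p => ¬ 0 < ε p.1 j),
      ε p.1 j * forestWeight ε p.2 = 0 := by
    refine Finset.sum_eq_zero fun p hp => ?_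
    have h := (Finset.mem_filter.mp hp).2
    rw [le_antisymm (not_lt.mp h) (hnn _ _), zero_mul]
  have sA' : ∑ p ∈ (Finset.univ.erase j ×ˢ QSet ε k i j).filter (fun p => 0 < ε p.1 j),
      ε p.1 j * forestWeight ε p.2
      = ∑ p ∈ ((Finset.univ.erase j ×ˢ QSet ε k i j).filter
            (fun p => 0 < ε p.1 j)).filter (fun p => rst p.2 j p.1),
          ε p.1 j * forestWeight ε p.2
        + ∑ p ∈ ((Finset.univ.erase j ×ˢ QSet ε k i j).filter
            (fun p => 0 < ε p.1 j)).filter (fun p => ¬ rst p.2 j p.1),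
          ε p.1 j * forestWeight ε p.2 :=
    (Finset.sum_filter_add_sum_filter_not _ _ _).symm
  -- splitting the B-sum
  have sB : ∑ p ∈ (Finset.univ.erase j ×ˢ forestSet ε k).filter
        (fun p => (∀ v, (v, p.1) ∉ p.2) ∧ rst p.2 p.1 i), ε j p.1 * forestWeight ε p.2
      = ∑ p ∈ ((Finset.univ.erase j ×ˢ forestSet ε k).filter
            (fun p => (∀ v, (v, p.1) ∉ p.2) ∧ rst p.2 p.1 i)).filter
            (fun p => 0 < ε j p.1),
          ε j p.1 * forestWeight ε p.2
        + ∑ p ∈ ((Finset.univ.erase j ×ˢ forestSet ε k).filter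
            (fun p => (∀ v, (v, p.1) ∉ p.2) ∧ rst p.2 p.1 i)).filter
            (fun p => ¬ 0 < ε j p.1),
          ε j p.1 * forestWeight ε p.2 :=
    (Finset.sum_filter_add_sum_filter_not _ _ _).symm
  have sB0 : ∑ p ∈ ((Finset.univ.erase j ×ˢ forestSet ε k).filter
        (fun p => (∀ v, (v, p.1) ∉ p.2) ∧ rst p.2 p.1 i)).filter
        (fun p => ¬ 0 < ε j p.1),
      ε j p.1 * forestWeight ε p.2 = 0 := by
    refine Finset.sum_eq_zero fun p hp => ?_
    have h := (Finset.mem_filter.mp hp).2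
    rw [le_antisymm (not_lt.mp h) (hnn _ _), zero_mul]
  have sB' : ∑ p ∈ ((Finset.univ.erase j ×ˢ forestSet ε k).filter
        (fun p => (∀ v, (v, p.1) ∉ p.2) ∧ rst p.2 p.1 i)).filter
        (fun p => 0 < ε j p.1),
      ε j p.1 * forestWeight ε p.2
      = ∑ p ∈ (((Finset.univ.erase j ×ˢ forestSet ε k).filter
            (fun p => (∀ v, (v, p.1) ∉ p.2) ∧ rst p.2 p.1 i)).filter
            (fun p => 0 < ε j p.1)).filter (fun p => rst p.2 p.1 j),
          ε j p.1 * forestWeight ε p.2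
        + ∑ p ∈ (((Finset.univ.erase j ×ˢ forestSet ε k).filter
            (fun p => (∀ v, (v, p.1) ∉ p.2) ∧ rst p.2 p.1 i)).filter
            (fun p => 0 < ε j p.1)).filter (fun p => ¬ rst p.2 p.1 j),
          ε j p.1 * forestWeight ε p.2 :=
    (Finset.sum_filter_add_sum_filter_not _ _ _).symm
  have hA2B2 := bijA2B2 ε k i j
  have hA1T := bijA1T ε k i j
  have hRsplit := R_split ε k i j
  by_cases hij : i = j
  · subst hij
    rw [if_pos rfl, mul_one]
    have hB1 := sumB1_diag ε k i
    have hRdiag := R_diag ε k i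
    linarith
  · rw [if_neg hij, mul_zero]
    have hB1R := bijB1R ε k hij
    linarith

end ForestProof
namespace ForestProof

variable {n : ℕ} {ε : Fin n → Fin n → ℝ}

/-- Matrix form of the fundamental recursion. -/
lemma keyM (hnn : ∀ a b, 0 ≤ ε a b) (k : ℕ) :
    QMat ε k * kirchhoff ε
      = sigmaW ε (k + 1) • (1 : Matrix (Fin n) (Fin n) ℝ) - QMat ε (k + 1) := by
  ext i j
  rw [Matrix.sub_apply, Matrix.smul_apply, Matrix.one_apply, key_entry hnn k i j,
    smul_eq_mul]

lemma QL_zero (hnn : ∀ a b, 0 ≤ ε a b) :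
    QMat ε (maxForestCard ε) * kirchhoff ε = 0 := by
  rw [keyM hnn, sigmaW_succ_max, QMat_succ_max, zero_smul, sub_zero]

lemma leftker (hnn : ∀ a b, 0 ≤ ε a b) {x : Fin n → ℝ}
    (hx : (kirchhoff ε)ᵀ *ᵥ x = 0) (k : ℕ) :
    (QMat ε k)ᵀ *ᵥ x = sigmaW ε k • x := by
  induction k with
  | zero => rw [QMat_zero, sigmaW_zero, Matrix.transpose_one, Matrix.one_mulVec, one_smul]
  | succ m ih =>
    have h2 : QMat ε (m + 1)
        = sigmaW ε (m + 1) • (1 : Matrix (Fin n) (Fin n) ℝ) - QMat ε m * kirchhoff ε := by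
      rw [keyM hnn m]
      abel
    rw [h2, Matrix.transpose_sub, Matrix.transpose_smul, Matrix.transpose_one,
      Matrix.transpose_mul, Matrix.sub_mulVec, Matrix.smul_mulVec, Matrix.one_mulVec,
      ← Matrix.mulVec_mulVec, ih, Matrix.mulVec_smul, hx, smul_zero, sub_zero]

end ForestProof


open ForestProof

/-- `J̄ᵀ·J̄ + L·Lᵀ` is nonsingular and `X = Lᵀ·(J̄ᵀ·J̄ + L·Lᵀ)⁻¹`
is the Moore–Penrose generalized inverse of `L`. -/
theorem moore_penrose_inverse_of_kirchhoff (n : ℕ) (hn : 1 < n)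
    (ε : Fin n → Fin n → ℝ)
    (hnonneg : ∀ i j, 0 ≤ ε i j) (hdiag : ∀ i, ε i i = 0) :
    IsUnit ((Jbar ε)ᵀ * Jbar ε + kirchhoff ε * (kirchhoff ε)ᵀ) ∧
    kirchhoff ε *
        ((kirchhoff ε)ᵀ * ((Jbar ε)ᵀ * Jbar ε + kirchhoff ε * (kirchhoff ε)ᵀ)⁻¹) *
        kirchhoff ε = kirchhoff ε ∧
    ((kirchhoff ε)ᵀ * ((Jbar ε)ᵀ * Jbar ε + kirchhoff ε * (kirchhoff ε)ᵀ)⁻¹) *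
        kirchhoff ε *
        ((kirchhoff ε)ᵀ * ((Jbar ε)ᵀ * Jbar ε + kirchhoff ε * (kirchhoff ε)ᵀ)⁻¹)
      = (kirchhoff ε)ᵀ * ((Jbar ε)ᵀ * Jbar ε + kirchhoff ε * (kirchhoff ε)ᵀ)⁻¹ ∧
    (kirchhoff ε *
        ((kirchhoff ε)ᵀ * ((Jbar ε)ᵀ * Jbar ε + kirchhoff ε * (kirchhoff ε)ᵀ)⁻¹))ᵀ
      = kirchhoff ε *
        ((kirchhoff ε)ᵀ * ((Jbar ε)ᵀ * Jbar ε + kirchhoff ε * (kirchhoff ε)ᵀ)⁻¹) ∧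
    (((kirchhoff ε)ᵀ * ((Jbar ε)ᵀ * Jbar ε + kirchhoff ε * (kirchhoff ε)ᵀ)⁻¹) *
        kirchhoff ε)ᵀ
      = ((kirchhoff ε)ᵀ * ((Jbar ε)ᵀ * Jbar ε + kirchhoff ε * (kirchhoff ε)ᵀ)⁻¹) *
        kirchhoff ε := by
  classical
  set L := kirchhoff ε with hLdef
  set J := Jbar ε with hJdef
  set M := Jᵀ * J + L * Lᵀ with hMdef
  set N := M⁻¹ with hNdef
  have hσ : 0 < sigmaW ε (maxForestCard ε) := sigmaW_max_pos ε
  have hJL : J * L = 0 := by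
    rw [hJdef, hLdef, Jbar, Matrix.smul_mul, QL_zero hnonneg, smul_zero]
  have hLtJt : Lᵀ * Jᵀ = 0 := by
    rw [← Matrix.transpose_mul, hJL, Matrix.transpose_zero]
  -- trivial kernel
  have hker : ∀ x : Fin n → ℝ, M *ᵥ x = 0 → x = 0 := by
    intro x hx
    have h1 : x ⬝ᵥ (M *ᵥ x) = 0 := by rw [hx, dotProduct_zero]
    have hsplit : x ⬝ᵥ (M *ᵥ x)
        = (J *ᵥ x) ⬝ᵥ (J *ᵥ x) + (Lᵀ *ᵥ x) ⬝ᵥ (Lᵀ *ᵥ x) := by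
      rw [hMdef, Matrix.add_mulVec, dotProduct_add]
      congr 1
      · rw [← Matrix.mulVec_mulVec, Matrix.dotProduct_mulVec, Matrix.vecMul_transpose]
      · rw [← Matrix.mulVec_mulVec, Matrix.dotProduct_mulVec]
        congr 1
        rw [Matrix.mulVec_transpose]
    have hJnn : 0 ≤ (J *ᵥ x) ⬝ᵥ (J *ᵥ x) :=
      Finset.sum_nonneg fun i _ => mul_self_nonneg _
    have hLnn : 0 ≤ (Lᵀ *ᵥ x) ⬝ᵥ (Lᵀ *ᵥ x) :=
      Finset.sum_nonneg fun i _ => mul_self_nonneg _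
    have hJ0 : (J *ᵥ x) ⬝ᵥ (J *ᵥ x) = 0 := by
      rw [hsplit] at h1
      linarith
    have hL0 : (Lᵀ *ᵥ x) ⬝ᵥ (Lᵀ *ᵥ x) = 0 := by
      rw [hsplit] at h1
      linarith
    have hJx : J *ᵥ x = 0 := dotProduct_self_eq_zero.mp hJ0
    have hLx : Lᵀ *ᵥ x = 0 := dotProduct_self_eq_zero.mp hL0
    have hQ : (QMat ε (maxForestCard ε))ᵀ *ᵥ x = sigmaW ε (maxForestCard ε) • x :=
      leftker hnonneg hLx _
    have hJtx : Jᵀ *ᵥ x = x := by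
      rw [hJdef, Jbar, Matrix.transpose_smul, Matrix.smul_mulVec, hQ, smul_smul,
        inv_mul_cancel₀ (ne_of_gt hσ), one_smul]
    have hxx : x ⬝ᵥ x = 0 := by
      have h2 : (Jᵀ *ᵥ x) ⬝ᵥ x = 0 := by
        rw [dotProduct_comm, Matrix.dotProduct_mulVec, Matrix.vecMul_transpose, hJx,
          zero_dotProduct]
      rw [hJtx] at h2
      exact h2
    exact dotProduct_self_eq_zero.mp hxx
  have hdet : IsUnit M.det := by
    rw [isUnit_iff_ne_zero]
    intro h
    obtain ⟨v, hv0, hv⟩ := (Matrix.exists_mulVec_eq_zero_iff).mpr h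
    exact hv0 (hker v hv)
  have hunit : IsUnit M := (Matrix.isUnit_iff_isUnit_det M).mpr hdet
  have hMinvR : M * N = 1 := Matrix.mul_nonsing_inv M hdet
  have hMinvL : N * M = 1 := Matrix.nonsing_inv_mul M hdet
  have hMsym : Mᵀ = M := by
    rw [hMdef, Matrix.transpose_add, Matrix.transpose_mul, Matrix.transpose_mul,
      Matrix.transpose_transpose, Matrix.transpose_transpose]
  have hMisym : Nᵀ = N := by
    rw [hNdef, Matrix.transpose_nonsing_inv, hMsym]
  have hML : M * L = L * Lᵀ * L := by
    rw [hMdef, Matrix.add_mul, mul_assoc, hJL, mul_zero, zero_add, mul_assoc]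
  have hLtM : Lᵀ * M = Lᵀ * (L * Lᵀ) := by
    rw [hMdef, Matrix.mul_add, ← mul_assoc, hLtJt, zero_mul, zero_add]
  have z1 : L * Lᵀ * (Jᵀ * J) = 0 := by
    rw [← mul_assoc, mul_assoc L Lᵀ Jᵀ, hLtJt, mul_zero, zero_mul]
  have z2 : Jᵀ * J * (L * Lᵀ) = 0 := by
    rw [← mul_assoc, mul_assoc Jᵀ J L, hJL, mul_zero, zero_mul]
  have hcomm : L * Lᵀ * M = M * (L * Lᵀ) := by
    rw [hMdef, Matrix.mul_add, Matrix.add_mul, z1, z2, zero_add]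
  have hcommInv : N * (L * Lᵀ) = L * Lᵀ * N := by
    have h := congrArg (fun A : Matrix (Fin n) (Fin n) ℝ => N * A * N) hcomm
    beta_reduce at h
    rw [← mul_assoc N (L * Lᵀ) M, mul_assoc (N * (L * Lᵀ)) M N, hMinvR, mul_one,
      ← mul_assoc N M (L * Lᵀ), hMinvL, one_mul] at h
    exact h
  refine ⟨hunit, ?_, ?_, ?_, ?_⟩
  · -- L X L = L
    calc L * (Lᵀ * N) * L = N * (L * Lᵀ) * L := by rw [← mul_assoc L Lᵀ N, hcommInv]
      _ = N * (M * L) := by rw [mul_assoc, ← hML]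
      _ = L := by rw [← mul_assoc, hMinvL, one_mul]
  · -- X L X = X
    calc Lᵀ * N * L * (Lᵀ * N)
        = Lᵀ * N * L * Lᵀ * N := by rw [← mul_assoc]
      _ = Lᵀ * N * (L * Lᵀ) * N := by rw [mul_assoc (Lᵀ * N) L Lᵀ]
      _ = Lᵀ * (N * (L * Lᵀ)) * N := by rw [mul_assoc Lᵀ N (L * Lᵀ)]
      _ = Lᵀ * (L * Lᵀ * N) * N := by rw [hcommInv]
      _ = Lᵀ * (L * Lᵀ) * N * N := by rw [← mul_assoc Lᵀ (L * Lᵀ) N, ← mul_assoc]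
      _ = Lᵀ * M * N * N := by rw [← hLtM]
      _ = Lᵀ * N := by rw [mul_assoc Lᵀ M N, hMinvR, mul_one]
  · -- (L X)ᵀ = L X
    rw [Matrix.transpose_mul, Matrix.transpose_mul, Matrix.transpose_transpose, hMisym,
      ← mul_assoc L Lᵀ N, ← hcommInv, ← mul_assoc]
  · -- (X L)ᵀ = X L
    rw [Matrix.transpose_mul, Matrix.transpose_mul, Matrix.transpose_transpose, hMisym,
      ← mul_assoc]
end

section
/- For every weighted digraph Γ, the polynomial p(λ) = λ·Σ_{i=0}^{n−v} σ_{n−v−i}·(−λ)^i is an annihilating polynomial for the Kirchhoff matrix L; that is, L·Σ_{i=0}^{n−v} σ_{n−v−i}·(−L)^i = 0. -/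
open Matrix BigOperators Filter

open Relation

section Aux
variable {n : ℕ}

def arcRel (F : Finset (Fin n × Fin n)) : Fin n → Fin n → Prop := fun a b => (a, b) ∈ F



/-- arc relation of a finite arc set -/

lemma transGen_exists_chain {α : Type*} {r : α → α → Prop} {a b : α}
    (h : Relation.TransGen r a b) :
    ∃ (k : ℕ) (f : ℕ → α), 0 < k ∧ f 0 = a ∧ f k = b ∧ ∀ i < k, r (f i) (f (i + 1)) := by
  induction h with
  | @single c hab =>
      exact ⟨1, fun m => if m = 0 then a else c, one_pos, by simp, by simp, by
        intro i hi
        interval_cases i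
        simpa using hab⟩
  | @tail c d _ hcd ih =>
      obtain ⟨k, f, hk, h0, hkb, hstep⟩ := ih
      refine ⟨k + 1, fun m => if m = k + 1 then d else f m, Nat.succ_pos _, ?_, by simp, ?_⟩
      · have : (0:ℕ) ≠ k + 1 := by omega
        simpa [this]
      intro i hi
      rcases Nat.lt_succ_iff_lt_or_eq.mp hi with hi' | heq
      · have h1 : i ≠ k + 1 := by omega
        have h2 : i + 1 ≠ k + 1 := by omega
        simpa [h1, h2, show i ≠ k by omega] using hstep i hi'
      · rw [heq]
        have h1 : k ≠ k + 1 := by omega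
        simpa [h1, hkb] using hcd

lemma chain_transGen {α : Type*} {r : α → α → Prop} {k : ℕ} {f : ℕ → α}
    (hk : 0 < k) (hstep : ∀ i < k, r (f i) (f (i + 1))) :
    Relation.TransGen r (f 0) (f k) := by
  induction k with
  | zero => omega
  | succ m ih =>
      rcases Nat.eq_zero_or_pos m with rfl | hm
      · exact TransGen.single (hstep 0 (by omega))
      · exact (ih hm (fun i hi => hstep i (by omega))).tail (hstep m (by omega))

/-- acyclicity in TransGen form -/
lemma noCycle_iff (F : Finset (Fin n × Fin n)) :
    (¬ ∃ (k : ℕ) (f : ℕ → Fin n), 0 < k ∧ f 0 = f k ∧ ∀ i < k, (f i, f (i + 1)) ∈ F) ↔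
      ∀ a, ¬ Relation.TransGen (arcRel F) a a := by
  constructor
  · rintro h a ha
    obtain ⟨k, f, hk, h0, hkb, hstep⟩ := transGen_exists_chain ha
    exact h ⟨k, f, hk, by rw [h0, hkb], hstep⟩
  · rintro h ⟨k, f, hk, hcyc, hstep⟩
    exact h (f 0) (by nth_rewrite 2 [hcyc]; exact chain_transGen hk hstep)

section reachlemmas
variable {α : Type*} {R : α → α → Prop} {i j x y : α}

/-- a path from `i` can avoid arcs into `i` -/
lemma reach_avoid_self (h : ReflTransGen R i x) :
    ReflTransGen (fun a b => R a b ∧ b ≠ i) i x := by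
  induction h with
  | refl => exact ReflTransGen.refl
  | @tail y x hjy hyx ih =>
      by_cases hx : x = i
      · subst hx; exact ReflTransGen.refl
      · exact ih.tail ⟨hyx, hx⟩

/-- if `i` cannot reach `x`, a path `j ⇒ x` avoids `i` -/
lemma reach_avoid_of_not_reach (hjx : ReflTransGen R j x) (hix : ¬ ReflTransGen R i x) :
    ReflTransGen (fun a b => R a b ∧ b ≠ i) j x := by
  induction hjx with
  | refl => exact ReflTransGen.refl
  | @tail y x hjy hyx ih =>
      have hiy : ¬ ReflTransGen R i y := fun h => hix (h.tail hyx)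
      have hxi : x ≠ i := fun h => hix (h ▸ ReflTransGen.refl)
      exact (ih hiy).tail ⟨hyx, hxi⟩

/-- reaching a point with no incoming arcs -/
lemma eq_of_reach_no_incoming (hni : ∀ a b, R a b → b ≠ i) (h : ReflTransGen R x i) :
    x = i := by
  rcases h.cases_tail with h | ⟨c, _, hc⟩
  · exact h.symm
  · exact absurd rfl (hni _ _ hc)
end reachlemmas

section forestlemmas
variable {F : Finset (Fin n × Fin n)} {i j u w x : Fin n}

lemma reach_mono (hFG : F ⊆ G) (h : ReflTransGen (arcRel F) x y) :
    ReflTransGen (arcRel G) x y :=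
  ReflTransGen.mono (fun _ _ hab => hFG hab) _ _ h

/-- only the root itself reaches a root -/
lemma eq_root_of_reach (hroot : ∀ u, (u, j) ∉ F) (h : ReflTransGen (arcRel F) x j) :
    x = j := by
  rcases h.cases_tail with h | ⟨c, _, hc⟩
  · exact h.symm
  · exact absurd hc (hroot c)

/-- ancestors of a common vertex are comparable in a forest -/
lemma reach_comparable (huniq : ∀ u u' v : Fin n, (u, v) ∈ F → (u', v) ∈ F → u = u')
    (haw : ReflTransGen (arcRel F) i w) (hbw : ReflTransGen (arcRel F) j w) :
    ReflTransGen (arcRel F) i j ∨ ReflTransGen (arcRel F) j i := by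
  have key : ∀ c, ReflTransGen (arcRel F) j c → ReflTransGen (arcRel F) i c →
      ReflTransGen (arcRel F) i j ∨ ReflTransGen (arcRel F) j i := by
    intro c hjc
    induction hjc with
    | refl => exact fun h => Or.inl h
    | @tail y c hjy hyc ih =>
        intro hic
        rcases hic.cases_tail with heq | ⟨z, hiz, hzc⟩
        · exact Or.inr (heq ▸ (hjy.tail hyc))
        · exact ih (huniq z y c hzc hyc ▸ hiz)
  exact key w hbw haw
end forestlemmas

variable {F G : Finset (Fin n × Fin n)} {i j u w x y : Fin n}

lemma reach_insert_self (h : ReflTransGen (arcRel (insert (u, i) F)) i y) :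
    ReflTransGen (arcRel F) i y := by
  have h2 : ReflTransGen (fun a b => arcRel (insert (u, i) F) a b ∧ b ≠ i) i y := by
    induction h with
    | refl => exact ReflTransGen.refl
    | @tail z x hjy hyx ih =>
        by_cases hx : x = i
        · subst hx; exact ReflTransGen.refl
        · exact ih.tail ⟨hyx, hx⟩
  refine ReflTransGen.mono ?_ _ _ h2
  rintro a b ⟨hab, hbi⟩
  rcases Finset.mem_insert.mp hab with heq | h
  · exact absurd (congrArg Prod.snd heq) hbi
  · exact h

lemma reach_insert_cases (h : ReflTransGen (arcRel (insert (u, i) F)) x y) :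
    ReflTransGen (arcRel F) x y ∨
      (ReflTransGen (arcRel F) x u ∧ ReflTransGen (arcRel (insert (u, i) F)) i y) := by
  induction h with
  | refl => exact Or.inl ReflTransGen.refl
  | @tail z y hxz hzy ih =>
      rcases ih with ih | ⟨h1, h2⟩
      · rcases Finset.mem_insert.mp hzy with heq | h
        · have hz : z = u := congrArg Prod.fst heq
          have hy : y = i := congrArg Prod.snd heq
          subst hz; subst hy
          exact Or.inr ⟨ih, ReflTransGen.refl⟩
        · exact Or.inl (ih.tail h)
      · exact Or.inr ⟨h1, h2.tail hzy⟩

lemma acyc_insert (hacyc : ∀ a, ¬ TransGen (arcRel F) a a)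
    (hnr : ¬ ReflTransGen (arcRel F) i u) (a : Fin n) :
    ¬ TransGen (arcRel (insert (u, i) F)) a a := by
  intro hcyc
  obtain ⟨b, hab, hba⟩ := (Relation.TransGen.tail'_iff).mp hcyc
  rcases reach_insert_cases hab with h | ⟨h1, h2⟩
  · rcases Finset.mem_insert.mp hba with heq | hm
    · have hb : b = u := congrArg Prod.fst heq
      have ha : a = i := congrArg Prod.snd heq
      exact hnr (hb ▸ ha ▸ h)
    · exact hacyc a (Relation.TransGen.tail'_iff.mpr ⟨b, h, hm⟩)
  · have hib : ReflTransGen (arcRel F) i b := reach_insert_self h2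
    rcases Finset.mem_insert.mp hba with heq | hm
    · have hb : b = u := congrArg Prod.fst heq
      have ha : a = i := congrArg Prod.snd heq
      exact hnr (ha ▸ h1)
    · exact hnr ((hib.tail hm).trans h1)

end Aux
section ForestOps
variable {n : ℕ} {ε : Fin n → Fin n → ℝ} {F G : Finset (Fin n × Fin n)} {i j u w x y : Fin n}

lemma IsOutForest.pos (h : IsOutForest ε F) : ∀ p ∈ F, 0 < ε p.1 p.2 := h.1
lemma IsOutForest.uniq (h : IsOutForest ε F) :
    ∀ u u' v : Fin n, (u, v) ∈ F → (u', v) ∈ F → u = u' := h.2.1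
lemma IsOutForest.acyc (h : IsOutForest ε F) : ∀ a, ¬ TransGen (arcRel F) a a :=
  (noCycle_iff F).mp h.2.2

lemma isOutForest_mk (hpos : ∀ p ∈ F, 0 < ε p.1 p.2)
    (huniq : ∀ u u' v : Fin n, (u, v) ∈ F → (u', v) ∈ F → u = u')
    (hacyc : ∀ a, ¬ TransGen (arcRel F) a a) : IsOutForest ε F :=
  ⟨hpos, huniq, (noCycle_iff F).mpr hacyc⟩

lemma IsOutForest.not_reach_of_arc (h : IsOutForest ε F) (hw : (w, i) ∈ F) :
    ¬ ReflTransGen (arcRel F) i w :=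
  fun hr => h.acyc i (TransGen.tail'_iff.mpr ⟨w, hr, hw⟩)

lemma IsOutForest.eraseF (h : IsOutForest ε F) (p : Fin n × Fin n) :
    IsOutForest ε (F.erase p) :=
  isOutForest_mk (fun q hq => h.pos q (Finset.mem_of_mem_erase hq))
    (fun a a' v h1 h2 => h.uniq a a' v (Finset.mem_of_mem_erase h1) (Finset.mem_of_mem_erase h2))
    (fun a hc => h.acyc a (TransGen.mono (fun _ _ hxy => Finset.mem_of_mem_erase hxy) _ _ hc))

lemma IsOutForest.insertArc (h : IsOutForest ε F) (hpos : 0 < ε u i)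
    (hroot : ∀ a, (a, i) ∉ F) (hnr : ¬ ReflTransGen (arcRel F) i u) :
    IsOutForest ε (insert (u, i) F) := by
  refine isOutForest_mk ?_ ?_ (acyc_insert h.acyc hnr)
  · intro p hp
    rcases Finset.mem_insert.mp hp with rfl | hp
    · exact hpos
    · exact h.pos p hp
  · intro a a' v h1 h2
    rcases Finset.mem_insert.mp h1 with heq1 | hm1 <;> rcases Finset.mem_insert.mp h2 with heq2 | hm2
    · injection heq1 with e1 _
      injection heq2 with e2 _
      exact e1.trans e2.symm
    · injection heq1 with _ e1
      subst e1
      exact absurd hm2 (hroot a')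
    · injection heq2 with _ e2
      subst e2
      exact absurd hm1 (hroot a)
    · exact h.uniq a a' v hm1 hm2

/-- transfer a path avoiding `i` into the swapped forest -/
lemma reach_swap_transfer (hjx : ReflTransGen (arcRel F) j x) (hnix : ¬ ReflTransGen (arcRel F) i x)
    {G : Finset (Fin n × Fin n)} (hsub : ∀ a b : Fin n, (a, b) ∈ F → b ≠ i → (a, b) ∈ G) :
    ReflTransGen (arcRel G) j x := by
  refine ReflTransGen.mono ?_ _ _ (reach_avoid_of_not_reach hjx hnix)
  rintro a b ⟨hab, hbi⟩
  exact hsub a b hab hbi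

/-- the last arc of a path into `i` is `i`'s unique incoming arc -/
lemma reach_to_inNbr (h : IsOutForest ε F) (hw : (w, i) ∈ F)
    (hji : ReflTransGen (arcRel F) j i) (hij : j ≠ i) : ReflTransGen (arcRel F) j w := by
  rcases hji.cases_tail with heq | ⟨c, hjc, hc⟩
  · exact absurd heq.symm hij
  · exact (h.uniq c w i hc hw) ▸ hjc

noncomputable def inN (F : Finset (Fin n × Fin n)) (i : Fin n) : Fin n :=
  if h : ∃ w, (w, i) ∈ F then h.choose else i

lemma inN_mem (h : (w, i) ∈ F) : (inN F i, i) ∈ F := by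
  have hex : ∃ a, (a, i) ∈ F := ⟨w, h⟩
  rw [inN, dif_pos hex]
  exact hex.choose_spec

lemma inN_eq (h : IsOutForest ε F) (hw : (w, i) ∈ F) : inN F i = w :=
  h.uniq _ _ _ (inN_mem hw) hw

lemma forestWeight_insert (h : (u, i) ∉ F) :
    forestWeight ε (insert (u, i) F) = ε u i * forestWeight ε F :=
  Finset.prod_insert h

lemma forestWeight_erase (h : (w, i) ∈ F) :
    forestWeight ε F = ε w i * forestWeight ε (F.erase (w, i)) :=
  (Finset.mul_prod_erase F _ h).symm

end ForestOps
set_option linter.unusedSectionVars false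
section SwapOps
variable {n : ℕ} {ε : Fin n → Fin n → ℝ} {F G : Finset (Fin n × Fin n)} {i j u w x y : Fin n}

lemma root_insert (hij : j ≠ i) (hroot : ∀ a, (a, j) ∉ F) :
    ∀ a, (a, j) ∉ insert (u, i) F := by
  intro a ha
  rcases Finset.mem_insert.mp ha with heq | hm
  · exact hij (congrArg Prod.snd heq)
  · exact hroot a hm

lemma root_erase (hroot : ∀ a, (a, j) ∉ F) (p : Fin n × Fin n) :
    ∀ a, (a, j) ∉ F.erase p :=
  fun a ha => hroot a (Finset.mem_of_mem_erase ha)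

lemma root_erase_self (hF : IsOutForest ε F) (hw : (w, i) ∈ F) :
    ∀ a, (a, i) ∉ F.erase (w, i) := by
  intro a ha
  have hm := Finset.mem_of_mem_erase ha
  have : a = w := hF.uniq a w i hm hw
  exact (Finset.ne_of_mem_erase ha) (by rw [this])

lemma not_mem_erase_incoming (hF : IsOutForest ε F) (hw : (w, i) ∈ F) :
    (u, i) ∉ F.erase (w, i) := fun h => root_erase_self hF hw u h

lemma reach_erase (h : ReflTransGen (arcRel (F.erase p)) x y) : ReflTransGen (arcRel F) x y :=
  reach_mono (Finset.erase_subset p F) h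

/-- a path avoiding `i` transfers into the swap `insert (u,i) (F.erase (w,i))` -/
lemma reach_swap (hjx : ReflTransGen (arcRel F) j x) (hnix : ¬ ReflTransGen (arcRel F) i x) :
    ReflTransGen (arcRel (insert (u, i) (F.erase (w, i)))) j x := by
  refine reach_swap_transfer hjx hnix ?_
  intro a b hab hbi
  exact Finset.mem_insert_of_mem (Finset.mem_erase.mpr ⟨by simp [Prod.ext_iff, hbi], hab⟩)

/-- a path avoiding `i` transfers into the erasure `F.erase (w,i)` -/
lemma reach_erase_tf (hjx : ReflTransGen (arcRel F) j x) (hnix : ¬ ReflTransGen (arcRel F) i x) :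
    ReflTransGen (arcRel (F.erase (w, i))) j x := by
  have h := reach_avoid_of_not_reach hjx hnix
  refine ReflTransGen.mono ?_ _ _ h
  rintro a b ⟨hab, hbi⟩
  exact Finset.mem_erase.mpr ⟨by simp [Prod.ext_iff, hbi], hab⟩

/-- a path out of the swap avoiding arcs into `i` lies in `F` -/
lemma reach_swap_back (h : ReflTransGen (arcRel (insert (u, i) (F.erase (w, i)))) i x) :
    ReflTransGen (arcRel F) i x := by
  refine ReflTransGen.mono ?_ _ _ (reach_avoid_self h)
  rintro a b ⟨hab, hbi⟩
  rcases Finset.mem_insert.mp hab with heq | hm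
  · exact absurd (congrArg Prod.snd heq) hbi
  · exact Finset.mem_of_mem_erase hm

section core
variable (hF : IsOutForest ε F) (hw : (w, i) ∈ F) (hu : 0 < ε u i)
  (hnru : ¬ ReflTransGen (arcRel F) i u)

include hF hw hu hnru

lemma swap_forest : IsOutForest ε (insert (u, i) (F.erase (w, i))) := by
  refine (hF.eraseF (w, i)).insertArc hu (root_erase_self hF hw) ?_
  exact fun h => hnru (reach_erase h)

lemma swap_card : (insert (u, i) (F.erase (w, i))).card = F.card := by
  rw [Finset.card_insert_of_notMem (not_mem_erase_incoming hF hw),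
    Finset.card_erase_of_mem hw]
  exact Nat.succ_pred_eq_of_pos (Finset.card_pos.mpr ⟨_, hw⟩)

lemma swap_not_reach : ¬ ReflTransGen (arcRel (insert (u, i) (F.erase (w, i)))) i w :=
  fun h => hF.not_reach_of_arc hw (reach_swap_back h)

lemma swap_weight :
    ε u i * forestWeight ε F = ε w i * forestWeight ε (insert (u, i) (F.erase (w, i))) := by
  rw [forestWeight_erase (ε := ε) hw, forestWeight_insert (not_mem_erase_incoming hF hw)]
  ring

lemma swap_inN : inN (insert (u, i) (F.erase (w, i))) i = u :=
  inN_eq (swap_forest hF hw hu hnru) (Finset.mem_insert_self _ _)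

lemma swap_back : insert (w, i) ((insert (u, i) (F.erase (w, i))).erase (u, i)) = F := by
  rw [Finset.erase_insert (not_mem_erase_incoming hF hw), Finset.insert_erase hw]

end core
end SwapOps
section SumSetup
variable {n : ℕ} {ε : Fin n → Fin n → ℝ} {F G : Finset (Fin n × Fin n)} {i j u w : Fin n} {k : ℕ}

open scoped Classical in
noncomputable def Fk (ε : Fin n → Fin n → ℝ) (k : ℕ) : Finset (Finset (Fin n × Fin n)) :=
  Finset.univ.filter fun F : Finset (Fin n × Fin n) => IsOutForest ε F ∧ F.card = k

open scoped Classical in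
noncomputable def Bk (ε : Fin n → Fin n → ℝ) (i j : Fin n) (k : ℕ) :
    Finset (Finset (Fin n × Fin n)) :=
  Finset.univ.filter fun F : Finset (Fin n × Fin n) =>
    IsOutForest ε F ∧ F.card = k ∧ (∀ u, (u, j) ∉ F) ∧ ReflTransGen (arcRel F) j i

lemma mem_Fk : F ∈ Fk ε k ↔ IsOutForest ε F ∧ F.card = k := by
  classical simp [Fk]

lemma mem_Bk : F ∈ Bk ε i j k ↔
    IsOutForest ε F ∧ F.card = k ∧ (∀ u, (u, j) ∉ F) ∧ ReflTransGen (arcRel F) j i := by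
  classical simp [Bk]

lemma sigmaW_eq (ε : Fin n → Fin n → ℝ) (k : ℕ) :
    sigmaW ε k = ∑ F ∈ Fk ε k, forestWeight ε F := by
  classical
  rw [sigmaW, ← finsum_mem_coe_finset]
  congr 1
  ext F
  simp [Fk]

lemma QMat_eq (ε : Fin n → Fin n → ℝ) (k : ℕ) (i j : Fin n) :
    QMat ε k i j = ∑ F ∈ Bk ε i j k, forestWeight ε F := by
  classical
  have hset : {F : Finset (Fin n × Fin n) | IsOutForest ε F ∧ F.card = k ∧
      (∀ u, (u, j) ∉ F) ∧ ReflTransGen (fun a b => (a, b) ∈ F) j i} = ↑(Bk ε i j k) := by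
    ext F
    simp only [Bk, Finset.coe_filter, Finset.mem_univ, true_and, Set.mem_setOf_eq]
    exact Iff.rfl
  rw [QMat, Matrix.of_apply, hset, finsum_mem_coe_finset]

lemma card_le_maxForestCard (hF : IsOutForest ε F) : F.card ≤ maxForestCard ε := by
  refine le_csSup ⟨Fintype.card (Fin n × Fin n), ?_⟩ ⟨F, hF, rfl⟩
  rintro m ⟨F', _, rfl⟩
  exact Finset.card_le_univ F'

lemma Fk_eq_empty (h : maxForestCard ε < k) : Fk ε k = ∅ := by
  rw [Finset.eq_empty_iff_forall_notMem]
  intro F hF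
  rw [mem_Fk] at hF
  exact absurd (hF.2 ▸ card_le_maxForestCard hF.1) (not_le.mpr h)

lemma Bk_eq_empty (h : maxForestCard ε < k) : Bk ε i j k = ∅ := by
  rw [Finset.eq_empty_iff_forall_notMem]
  intro F hF
  rw [mem_Bk] at hF
  exact absurd (hF.2.1 ▸ card_le_maxForestCard hF.1) (not_le.mpr h)

end SumSetup
section EntryLemmas
variable {n : ℕ} {ε : Fin n → Fin n → ℝ} {i j u w : Fin n} {k : ℕ}

lemma kirchhoff_mul_apply (hdiag : ∀ a, ε a a = 0) (M : Matrix (Fin n) (Fin n) ℝ) (i j : Fin n) :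
    (kirchhoff ε * M) i j = (∑ u, ε u i * M i j) - ∑ u, ε u i * M u j := by
  classical
  rw [Matrix.mul_apply, ← Finset.add_sum_erase Finset.univ _ (Finset.mem_univ i)]
  have h1 : kirchhoff ε i i = ∑ u, ε u i := by
    rw [kirchhoff, Matrix.of_apply, if_pos rfl, Finset.filter_ne']
    exact Finset.sum_erase _ (hdiag i)
  have h2 : ∀ s ∈ Finset.univ.erase i, kirchhoff ε i s * M s j = -(ε s i * M s j) := by
    intro s hs
    rw [kirchhoff, Matrix.of_apply, if_neg (Ne.symm (Finset.mem_erase.mp hs).1), neg_mul]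
  rw [Finset.sum_congr rfl h2, Finset.sum_neg_distrib,
    Finset.sum_erase (f := fun s => ε s i * M s j) _ (show ε i i * M i j = 0 by rw [hdiag]; ring),
    h1, Finset.sum_mul]
  ring

lemma sum_mul_q_eq_pairs (hnonneg : ∀ a b, 0 ≤ ε a b) (i : Fin n)
    (S : Fin n → Finset (Finset (Fin n × Fin n))) :
    ∑ u, ε u i * ∑ F ∈ S u, forestWeight ε F
      = ∑ p ∈ Finset.univ.filter (fun p : Fin n × Finset (Fin n × Fin n) =>
          p.2 ∈ S p.1 ∧ 0 < ε p.1 i), ε p.1 i * forestWeight ε p.2 := by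
  classical
  rw [Finset.sum_filter, Fintype.sum_prod_type]
  refine Finset.sum_congr rfl ?_
  intro u _
  by_cases hpos : 0 < ε u i
  · rw [Finset.mul_sum]
    simp only [hpos, and_true]
    rw [Finset.sum_ite_mem, Finset.univ_inter]
  · have hz : ε u i = 0 := le_antisymm (not_lt.mp hpos) (hnonneg u i)
    simp [hz, hpos]

end EntryLemmas
section Bijections
variable {n : ℕ} {ε : Fin n → Fin n → ℝ} {i j u w : Fin n} {k : ℕ}

open scoped Classical in
lemma bij_swap (ε : Fin n → Fin n → ℝ) (i j : Fin n) (k : ℕ) :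
    ∑ p ∈ Finset.univ.filter (fun p : Fin n × Finset (Fin n × Fin n) =>
        (p.2 ∈ Bk ε i j k ∧ 0 < ε p.1 i) ∧
        ¬ ReflTransGen (arcRel p.2) i p.1 ∧ ¬ (∀ a, (a, i) ∉ p.2)),
      ε p.1 i * forestWeight ε p.2
    = ∑ p ∈ Finset.univ.filter (fun p : Fin n × Finset (Fin n × Fin n) =>
        (p.2 ∈ Bk ε p.1 j k ∧ 0 < ε p.1 i) ∧
        ¬ ReflTransGen (arcRel p.2) i p.1 ∧ ¬ (∀ a, (a, i) ∉ p.2)),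
      ε p.1 i * forestWeight ε p.2 := by
  classical
  refine Finset.sum_bij'
    (fun p _ => (inN p.2 i, insert (p.1, i) (p.2.erase (inN p.2 i, i))))
    (fun p _ => (inN p.2 i, insert (p.1, i) (p.2.erase (inN p.2 i, i))))
    ?hi ?hj ?hli ?hri ?hval
  case hi =>
    rintro ⟨u, F⟩ hp
    rw [Finset.mem_filter] at hp
    obtain ⟨-, ⟨hB, hpos⟩, hnr, hnroot⟩ := hp
    rw [mem_Bk] at hB
    obtain ⟨hF, hcard, hroot, hji⟩ := hB
    obtain ⟨a, ha⟩ : ∃ a, (a, i) ∈ F := by push_neg at hnroot; exact hnroot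
    have hw : (inN F i, i) ∈ F := inN_mem ha
    have hij : i ≠ j := fun h => hroot _ (h ▸ hw)
    rw [Finset.mem_filter, mem_Bk]
    dsimp only
    refine ⟨Finset.mem_univ _, ⟨⟨swap_forest hF hw hpos hnr, ?_, ?_, ?_⟩, hF.pos _ hw⟩,
      swap_not_reach hF hw hpos hnr, ?_⟩
    · rw [swap_card hF hw hpos hnr, hcard]
    · exact root_insert (Ne.symm hij) (root_erase hroot _)
    · exact reach_swap (reach_to_inNbr hF hw hji (Ne.symm hij)) (hF.not_reach_of_arc hw)
    · intro hall
      exact hall u (Finset.mem_insert_self _ _)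
  case hj =>
    rintro ⟨w, G⟩ hp
    rw [Finset.mem_filter] at hp
    obtain ⟨-, ⟨hB, hpos⟩, hnr, hnroot⟩ := hp
    rw [mem_Bk] at hB
    obtain ⟨hG, hcard, hroot, hjw⟩ := hB
    obtain ⟨a, ha⟩ : ∃ a, (a, i) ∈ G := by push_neg at hnroot; exact hnroot
    have hu : (inN G i, i) ∈ G := inN_mem ha
    have hij : i ≠ j := fun h => hroot _ (h ▸ hu)
    rw [Finset.mem_filter, mem_Bk]
    dsimp only
    refine ⟨Finset.mem_univ _, ⟨⟨swap_forest hG hu hpos hnr, ?_, ?_, ?_⟩, hG.pos _ hu⟩,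
      swap_not_reach hG hu hpos hnr, ?_⟩
    · rw [swap_card hG hu hpos hnr, hcard]
    · exact root_insert (Ne.symm hij) (root_erase hroot _)
    · exact ReflTransGen.tail (reach_swap hjw hnr) (Finset.mem_insert_self _ _)
    · intro hall
      exact hall w (Finset.mem_insert_self _ _)
  case hli =>
    rintro ⟨u, F⟩ hp
    rw [Finset.mem_filter] at hp
    obtain ⟨-, ⟨hB, hpos⟩, hnr, hnroot⟩ := hp
    rw [mem_Bk] at hB
    obtain ⟨hF, hcard, hroot, hji⟩ := hB
    obtain ⟨a, ha⟩ : ∃ a, (a, i) ∈ F := by push_neg at hnroot; exact hnroot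
    have hw : (inN F i, i) ∈ F := inN_mem ha
    have h1 : inN (insert (u, i) (F.erase (inN F i, i))) i = u := swap_inN hF hw hpos hnr
    simp only [h1, Prod.mk.injEq]
    exact ⟨trivial, swap_back hF hw hpos hnr⟩
  case hri =>
    rintro ⟨w, G⟩ hp
    rw [Finset.mem_filter] at hp
    obtain ⟨-, ⟨hB, hpos⟩, hnr, hnroot⟩ := hp
    rw [mem_Bk] at hB
    obtain ⟨hG, hcard, hroot, hjw⟩ := hB
    obtain ⟨a, ha⟩ : ∃ a, (a, i) ∈ G := by push_neg at hnroot; exact hnroot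
    have hu : (inN G i, i) ∈ G := inN_mem ha
    have h1 : inN (insert (w, i) (G.erase (inN G i, i))) i = w := swap_inN hG hu hpos hnr
    simp only [h1, Prod.mk.injEq]
    exact ⟨trivial, swap_back hG hu hpos hnr⟩
  case hval =>
    rintro ⟨u, F⟩ hp
    rw [Finset.mem_filter] at hp
    obtain ⟨-, ⟨hB, hpos⟩, hnr, hnroot⟩ := hp
    rw [mem_Bk] at hB
    obtain ⟨hF, hcard, hroot, hji⟩ := hB
    obtain ⟨a, ha⟩ : ∃ a, (a, i) ∈ F := by push_neg at hnroot; exact hnroot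
    have hw : (inN F i, i) ∈ F := inN_mem ha
    exact swap_weight hF hw hpos hnr

end Bijections
section Bijections2
variable {n : ℕ} {ε : Fin n → Fin n → ℝ} {i j u w : Fin n} {k : ℕ}

open scoped Classical in
lemma bij_attach (ε : Fin n → Fin n → ℝ) {i j : Fin n} (hij : i ≠ j) (k : ℕ) :
    ∑ H ∈ Bk ε i j (k + 1), forestWeight ε H
    = ∑ p ∈ Finset.univ.filter (fun p : Fin n × Finset (Fin n × Fin n) =>
        (p.2 ∈ Bk ε p.1 j k ∧ 0 < ε p.1 i) ∧
        ¬ ReflTransGen (arcRel p.2) i p.1 ∧ (∀ a, (a, i) ∉ p.2)),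
      ε p.1 i * forestWeight ε p.2 := by
  classical
  refine Finset.sum_bij'
    (fun H _ => (inN H i, H.erase (inN H i, i)))
    (fun p _ => insert (p.1, i) p.2) ?hi ?hj ?hli ?hri ?hval
  case hi =>
    intro H hp
    rw [mem_Bk] at hp
    obtain ⟨hF, hcard, hroot, hji⟩ := hp
    obtain ⟨c, hjc, hc⟩ : ∃ c, ReflTransGen (arcRel H) j c ∧ (c, i) ∈ H := by
      rcases hji.cases_tail with heq | h
      · exact absurd heq hij
      · exact h
    have hw : (inN H i, i) ∈ H := inN_mem hc
    rw [Finset.mem_filter, mem_Bk]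
    dsimp only
    refine ⟨Finset.mem_univ _, ⟨⟨hF.eraseF _, ?_, root_erase hroot _, ?_⟩, hF.pos _ hw⟩,
      fun h => hF.not_reach_of_arc hw (reach_erase h), root_erase_self hF hw⟩
    · rw [Finset.card_erase_of_mem hw, hcard]
      omega
    · exact reach_erase_tf (reach_to_inNbr hF hw hji (Ne.symm hij)) (hF.not_reach_of_arc hw)
  case hj =>
    rintro ⟨w, G⟩ hp
    rw [Finset.mem_filter] at hp
    obtain ⟨-, ⟨hB, hpos⟩, hnr, hrooti⟩ := hp
    rw [mem_Bk] at hB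
    obtain ⟨hG, hcard, hroot, hjw⟩ := hB
    rw [mem_Bk]
    refine ⟨hG.insertArc hpos hrooti hnr, ?_, root_insert (Ne.symm hij) hroot, ?_⟩
    · rw [Finset.card_insert_of_notMem (hrooti w), hcard]
    · exact ReflTransGen.tail (reach_mono (Finset.subset_insert _ _) hjw)
        (Finset.mem_insert_self _ _)
  case hli =>
    intro H hp
    rw [mem_Bk] at hp
    obtain ⟨hF, hcard, hroot, hji⟩ := hp
    obtain ⟨c, hjc, hc⟩ : ∃ c, ReflTransGen (arcRel H) j c ∧ (c, i) ∈ H := by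
      rcases hji.cases_tail with heq | h
      · exact absurd heq hij
      · exact h
    exact Finset.insert_erase (inN_mem hc)
  case hri =>
    rintro ⟨w, G⟩ hp
    rw [Finset.mem_filter] at hp
    obtain ⟨-, ⟨hB, hpos⟩, hnr, hrooti⟩ := hp
    rw [mem_Bk] at hB
    obtain ⟨hG, hcard, hroot, hjw⟩ := hB
    have hforest : IsOutForest ε (insert (w, i) G) := hG.insertArc hpos hrooti hnr
    have h1 : inN (insert (w, i) G) i = w := inN_eq hforest (Finset.mem_insert_self _ _)
    simp only [h1, Prod.mk.injEq]
    exact ⟨trivial, Finset.erase_insert (hrooti w)⟩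
  case hval =>
    intro H hp
    rw [mem_Bk] at hp
    obtain ⟨hF, hcard, hroot, hji⟩ := hp
    obtain ⟨c, hjc, hc⟩ : ∃ c, ReflTransGen (arcRel H) j c ∧ (c, i) ∈ H := by
      rcases hji.cases_tail with heq | h
      · exact absurd heq hij
      · exact h
    exact forestWeight_erase (inN_mem hc)

open scoped Classical in
lemma bij_attach_diag (ε : Fin n → Fin n → ℝ) (j : Fin n) (k : ℕ) :
    ∑ H ∈ (Fk ε (k + 1)).filter (fun H => ¬ (∀ a, (a, j) ∉ H)), forestWeight ε H
    = ∑ p ∈ Finset.univ.filter (fun p : Fin n × Finset (Fin n × Fin n) =>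
        (p.2 ∈ Bk ε j j k ∧ 0 < ε p.1 j) ∧
        ¬ ReflTransGen (arcRel p.2) j p.1 ∧ (∀ a, (a, j) ∉ p.2)),
      ε p.1 j * forestWeight ε p.2 := by
  classical
  refine Finset.sum_bij'
    (fun H _ => (inN H j, H.erase (inN H j, j)))
    (fun p _ => insert (p.1, j) p.2) ?hi ?hj ?hli ?hri ?hval
  case hi =>
    intro H hp
    rw [Finset.mem_filter, mem_Fk] at hp
    obtain ⟨⟨hF, hcard⟩, hnroot⟩ := hp
    obtain ⟨a, ha⟩ : ∃ a, (a, j) ∈ H := by push_neg at hnroot; exact hnroot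
    have hw : (inN H j, j) ∈ H := inN_mem ha
    rw [Finset.mem_filter, mem_Bk]
    dsimp only
    refine ⟨Finset.mem_univ _, ⟨⟨hF.eraseF _, ?_, root_erase_self hF hw, ReflTransGen.refl⟩,
      hF.pos _ hw⟩, fun h => hF.not_reach_of_arc hw (reach_erase h), root_erase_self hF hw⟩
    rw [Finset.card_erase_of_mem hw, hcard]
    omega
  case hj =>
    rintro ⟨u, F⟩ hp
    rw [Finset.mem_filter] at hp
    obtain ⟨-, ⟨hB, hpos⟩, hnr, hrootj⟩ := hp
    rw [mem_Bk] at hB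
    obtain ⟨hF, hcard, hroot, -⟩ := hB
    rw [Finset.mem_filter, mem_Fk]
    refine ⟨⟨hF.insertArc hpos hroot hnr, ?_⟩, ?_⟩
    · rw [Finset.card_insert_of_notMem (hroot u), hcard]
    · intro hall
      exact hall u (Finset.mem_insert_self _ _)
  case hli =>
    intro H hp
    rw [Finset.mem_filter, mem_Fk] at hp
    obtain ⟨⟨hF, hcard⟩, hnroot⟩ := hp
    obtain ⟨a, ha⟩ : ∃ a, (a, j) ∈ H := by push_neg at hnroot; exact hnroot
    exact Finset.insert_erase (inN_mem ha)
  case hri =>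
    rintro ⟨u, F⟩ hp
    rw [Finset.mem_filter] at hp
    obtain ⟨-, ⟨hB, hpos⟩, hnr, hrootj⟩ := hp
    rw [mem_Bk] at hB
    obtain ⟨hF, hcard, hroot, -⟩ := hB
    have hforest : IsOutForest ε (insert (u, j) F) := hF.insertArc hpos hroot hnr
    have h1 : inN (insert (u, j) F) j = u := inN_eq hforest (Finset.mem_insert_self _ _)
    simp only [h1, Prod.mk.injEq]
    exact ⟨trivial, Finset.erase_insert (hroot u)⟩
  case hval =>
    intro H hp
    rw [Finset.mem_filter, mem_Fk] at hp
    obtain ⟨⟨hF, hcard⟩, hnroot⟩ := hp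
    obtain ⟨a, ha⟩ : ∃ a, (a, j) ∈ H := by push_neg at hnroot; exact hnroot
    exact forestWeight_erase (inN_mem ha)

end Bijections2
section KeyIdentity
variable {n : ℕ} {ε : Fin n → Fin n → ℝ} {i j u w : Fin n} {k : ℕ}

open scoped Classical in
lemma Xa_eq (ε : Fin n → Fin n → ℝ) (i j : Fin n) (k : ℕ) :
    (Finset.univ.filter (fun p : Fin n × Finset (Fin n × Fin n) =>
        (p.2 ∈ Bk ε i j k ∧ 0 < ε p.1 i) ∧ ReflTransGen (arcRel p.2) i p.1))
    = Finset.univ.filter (fun p : Fin n × Finset (Fin n × Fin n) =>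
        (p.2 ∈ Bk ε p.1 j k ∧ 0 < ε p.1 i) ∧ ReflTransGen (arcRel p.2) i p.1) := by
  ext p
  simp only [Finset.mem_filter, mem_Bk, Finset.mem_univ, true_and]
  constructor
  · rintro ⟨⟨⟨hF, hcard, hroot, hji⟩, hpos⟩, hiu⟩
    exact ⟨⟨⟨hF, hcard, hroot, hji.trans hiu⟩, hpos⟩, hiu⟩
  · rintro ⟨⟨⟨hF, hcard, hroot, hju⟩, hpos⟩, hiu⟩
    refine ⟨⟨⟨hF, hcard, hroot, ?_⟩, hpos⟩, hiu⟩
    rcases reach_comparable hF.uniq hiu hju with h | h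
    · have : i = j := eq_root_of_reach hroot h
      exact this ▸ ReflTransGen.refl
    · exact h

open scoped Classical in
lemma key_entry (hnonneg : ∀ a b, 0 ≤ ε a b) (i j : Fin n) (k : ℕ) :
    (∑ u, ε u i * QMat ε k i j) + QMat ε (k + 1) i j
    = (if i = j then sigmaW ε (k + 1) else 0) + ∑ u, ε u i * QMat ε k u j := by
  classical
  -- abbreviations for predicates
  set R : Fin n × Finset (Fin n × Fin n) → Prop :=
    fun p => ReflTransGen (arcRel p.2) i p.1 with hR
  set Ro : Fin n × Finset (Fin n × Fin n) → Prop := fun p => ∀ a, (a, i) ∉ p.2 with hRo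
  -- left pair sum
  have hL : ∑ u, ε u i * QMat ε k i j
      = ∑ p ∈ Finset.univ.filter (fun p : Fin n × Finset (Fin n × Fin n) =>
          p.2 ∈ Bk ε i j k ∧ 0 < ε p.1 i), ε p.1 i * forestWeight ε p.2 := by
    simp_rw [QMat_eq]
    exact sum_mul_q_eq_pairs hnonneg i (fun _ => Bk ε i j k)
  have hRt : ∑ u, ε u i * QMat ε k u j
      = ∑ p ∈ Finset.univ.filter (fun p : Fin n × Finset (Fin n × Fin n) =>
          p.2 ∈ Bk ε p.1 j k ∧ 0 < ε p.1 i), ε p.1 i * forestWeight ε p.2 := by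
    simp_rw [QMat_eq]
    exact sum_mul_q_eq_pairs hnonneg i (fun u => Bk ε u j k)
  rw [hL, hRt]
  -- split both pair sums
  rw [← Finset.sum_filter_add_sum_filter_not
      (Finset.univ.filter (fun p : Fin n × Finset (Fin n × Fin n) =>
        p.2 ∈ Bk ε i j k ∧ 0 < ε p.1 i)) R,
    ← Finset.sum_filter_add_sum_filter_not
      (Finset.univ.filter (fun p : Fin n × Finset (Fin n × Fin n) =>
        p.2 ∈ Bk ε p.1 j k ∧ 0 < ε p.1 i)) R,
    ← Finset.sum_filter_add_sum_filter_not
      ((Finset.univ.filter (fun p : Fin n × Finset (Fin n × Fin n) =>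
        p.2 ∈ Bk ε i j k ∧ 0 < ε p.1 i)).filter (fun p => ¬ R p)) Ro,
    ← Finset.sum_filter_add_sum_filter_not
      ((Finset.univ.filter (fun p : Fin n × Finset (Fin n × Fin n) =>
        p.2 ∈ Bk ε p.1 j k ∧ 0 < ε p.1 i)).filter (fun p => ¬ R p)) Ro]
  -- rewrite nested filters into flat ones
  simp only [Finset.filter_filter]
  by_cases hij : i = j
  · subst hij
    -- diagonal case
    have h1 : Finset.filter (fun a : Fin n × Finset (Fin n × Fin n) =>
        ((a.2 ∈ Bk ε a.1 i k ∧ 0 < ε a.1 i) ∧ ¬R a) ∧ Ro a) Finset.univ = ∅ := by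
      rw [Finset.eq_empty_iff_forall_notMem]
      rintro ⟨u, F⟩ hp
      simp only [Finset.mem_filter, mem_Bk, hR, hRo] at hp
      exact hp.2.1.2 hp.2.1.1.1.2.2.2
    have h2 : Finset.filter (fun a : Fin n × Finset (Fin n × Fin n) =>
        ((a.2 ∈ Bk ε a.1 i k ∧ 0 < ε a.1 i) ∧ ¬R a) ∧ ¬Ro a) Finset.univ = ∅ := by
      rw [Finset.eq_empty_iff_forall_notMem]
      rintro ⟨u, F⟩ hp
      simp only [Finset.mem_filter, mem_Bk, hR, hRo] at hp
      exact hp.2.1.2 hp.2.1.1.1.2.2.2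
    have h3 : Finset.filter (fun a : Fin n × Finset (Fin n × Fin n) =>
        ((a.2 ∈ Bk ε i i k ∧ 0 < ε a.1 i) ∧ ¬R a) ∧ ¬Ro a) Finset.univ = ∅ := by
      rw [Finset.eq_empty_iff_forall_notMem]
      rintro ⟨u, F⟩ hp
      simp only [Finset.mem_filter, mem_Bk, hR, hRo] at hp
      exact hp.2.2 hp.2.1.1.1.2.2.1
    have h4 : ∑ x ∈ Finset.filter (fun a : Fin n × Finset (Fin n × Fin n) =>
          ((a.2 ∈ Bk ε i i k ∧ 0 < ε a.1 i) ∧ ¬R a) ∧ Ro a) Finset.univ,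
          ε x.1 i * forestWeight ε x.2
        = ∑ H ∈ (Fk ε (k + 1)).filter (fun H => ¬ (∀ a, (a, i) ∉ H)), forestWeight ε H := by
      rw [bij_attach_diag ε i k]
      apply Finset.sum_congr
      · ext p
        simp only [Finset.mem_filter, hR, hRo]
        tauto
      · intros; rfl
    have h5 : QMat ε (k + 1) i i
        = ∑ H ∈ (Fk ε (k + 1)).filter (fun H => (∀ a, (a, i) ∉ H)), forestWeight ε H := by
      rw [QMat_eq]
      apply Finset.sum_congr
      · ext H
        simp only [Finset.mem_filter, mem_Bk, mem_Fk]
        constructor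
        · rintro ⟨hF, hc, hr, -⟩
          exact ⟨⟨hF, hc⟩, hr⟩
        · rintro ⟨⟨hF, hc⟩, hr⟩
          exact ⟨hF, hc, hr, ReflTransGen.refl⟩
      · intros; rfl
    have h6 : sigmaW ε (k + 1)
        = ∑ H ∈ (Fk ε (k + 1)).filter (fun H => (∀ a, (a, i) ∉ H)), forestWeight ε H
          + ∑ H ∈ (Fk ε (k + 1)).filter (fun H => ¬ (∀ a, (a, i) ∉ H)), forestWeight ε H := by
      rw [sigmaW_eq, Finset.sum_filter_add_sum_filter_not]
    rw [Xa_eq ε i i k, h1, h2, h3, h4, h5, if_pos rfl, h6]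
    simp only [hR, Finset.sum_empty]
    ring
  · -- off-diagonal case
    have h1 : Finset.filter (fun a : Fin n × Finset (Fin n × Fin n) =>
        ((a.2 ∈ Bk ε i j k ∧ 0 < ε a.1 i) ∧ ¬R a) ∧ Ro a) Finset.univ = ∅ := by
      rw [Finset.eq_empty_iff_forall_notMem]
      rintro ⟨u, F⟩ hp
      simp only [Finset.mem_filter, mem_Bk, hR, hRo] at hp
      exact hij (eq_root_of_reach hp.2.2 hp.2.1.1.1.2.2.2).symm
    have h2 : ∑ x ∈ Finset.filter (fun a : Fin n × Finset (Fin n × Fin n) =>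
          ((a.2 ∈ Bk ε i j k ∧ 0 < ε a.1 i) ∧ ¬R a) ∧ ¬Ro a) Finset.univ,
          ε x.1 i * forestWeight ε x.2
        = ∑ x ∈ Finset.filter (fun a : Fin n × Finset (Fin n × Fin n) =>
          ((a.2 ∈ Bk ε a.1 j k ∧ 0 < ε a.1 i) ∧ ¬R a) ∧ ¬Ro a) Finset.univ,
          ε x.1 i * forestWeight ε x.2 := by
      have e1 : Finset.filter (fun a : Fin n × Finset (Fin n × Fin n) =>
          ((a.2 ∈ Bk ε i j k ∧ 0 < ε a.1 i) ∧ ¬R a) ∧ ¬Ro a) Finset.univ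
          = Finset.filter (fun p : Fin n × Finset (Fin n × Fin n) =>
          (p.2 ∈ Bk ε i j k ∧ 0 < ε p.1 i) ∧
          ¬ ReflTransGen (arcRel p.2) i p.1 ∧ ¬ (∀ a, (a, i) ∉ p.2)) Finset.univ := by
        ext p
        simp only [Finset.mem_filter, hR, hRo]
        tauto
      have e2 : Finset.filter (fun a : Fin n × Finset (Fin n × Fin n) =>
          ((a.2 ∈ Bk ε a.1 j k ∧ 0 < ε a.1 i) ∧ ¬R a) ∧ ¬Ro a) Finset.univ
          = Finset.filter (fun p : Fin n × Finset (Fin n × Fin n) =>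
          (p.2 ∈ Bk ε p.1 j k ∧ 0 < ε p.1 i) ∧
          ¬ ReflTransGen (arcRel p.2) i p.1 ∧ ¬ (∀ a, (a, i) ∉ p.2)) Finset.univ := by
        ext p
        simp only [Finset.mem_filter, hR, hRo]
        tauto
      rw [e1, e2]
      exact bij_swap ε i j k
    have h3 : QMat ε (k + 1) i j
        = ∑ x ∈ Finset.filter (fun a : Fin n × Finset (Fin n × Fin n) =>
          ((a.2 ∈ Bk ε a.1 j k ∧ 0 < ε a.1 i) ∧ ¬R a) ∧ Ro a) Finset.univ,
          ε x.1 i * forestWeight ε x.2 := by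
      rw [QMat_eq, bij_attach ε hij k]
      apply Finset.sum_congr
      · ext p
        simp only [Finset.mem_filter, hR, hRo]
        tauto
      · intros; rfl
    rw [Xa_eq ε i j k, h1, h2, h3, if_neg hij]
    simp only [Finset.sum_empty]
    ring


end KeyIdentity
section Final
variable {n : ℕ} {ε : Fin n → Fin n → ℝ} {i j : Fin n} {k : ℕ}

lemma isOutForest_empty (ε : Fin n → Fin n → ℝ) : IsOutForest ε (∅ : Finset (Fin n × Fin n)) := by
  refine isOutForest_mk (by simp) (by simp) ?_
  intro a h
  rcases Relation.TransGen.tail'_iff.mp h with ⟨b, -, hb⟩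
  exact absurd hb (Finset.notMem_empty _)

lemma reach_empty (h : ReflTransGen (arcRel (∅ : Finset (Fin n × Fin n))) j i) : j = i :=
  eq_root_of_reach (fun u => Finset.notMem_empty (u, i)) h

lemma QMat_zero (ε : Fin n → Fin n → ℝ) : QMat ε 0 = (1 : Matrix (Fin n) (Fin n) ℝ) := by
  classical
  ext i j
  rw [QMat_eq, Matrix.one_apply]
  by_cases hij : i = j
  · subst hij
    have : Bk ε i i 0 = {∅} := by
      ext F
      simp only [mem_Bk, Finset.mem_singleton, Finset.card_eq_zero]
      constructor
      · rintro ⟨-, h, -, -⟩; exact h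
      · rintro rfl
        exact ⟨isOutForest_empty ε, rfl, fun u => Finset.notMem_empty _, ReflTransGen.refl⟩
    rw [this, Finset.sum_singleton, if_pos rfl, forestWeight, Finset.prod_empty]
  · have : Bk ε i j 0 = ∅ := by
      rw [Finset.eq_empty_iff_forall_notMem]
      intro F hF
      rw [mem_Bk, Finset.card_eq_zero] at hF
      obtain ⟨-, rfl, -, hr⟩ := hF
      exact hij (reach_empty hr).symm
    rw [this, Finset.sum_empty, if_neg hij]

lemma sigmaW_zero (ε : Fin n → Fin n → ℝ) : sigmaW ε 0 = 1 := by
  classical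
  rw [sigmaW_eq]
  have : Fk ε 0 = {∅} := by
    ext F
    simp only [mem_Fk, Finset.mem_singleton, Finset.card_eq_zero]
    constructor
    · rintro ⟨-, h⟩; exact h
    · rintro rfl; exact ⟨isOutForest_empty ε, rfl⟩
  rw [this, Finset.sum_singleton, forestWeight, Finset.prod_empty]

lemma QMat_recurrence (hnonneg : ∀ a b, 0 ≤ ε a b) (hdiag : ∀ a, ε a a = 0) (k : ℕ) :
    QMat ε (k + 1)
      = sigmaW ε (k + 1) • (1 : Matrix (Fin n) (Fin n) ℝ) - kirchhoff ε * QMat ε k := by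
  ext i j
  have hk := key_entry hnonneg i j k
  have hm := kirchhoff_mul_apply hdiag (QMat ε k) i j
  simp only [Matrix.sub_apply, Matrix.smul_apply, Matrix.one_apply, smul_eq_mul, mul_ite,
    mul_one, mul_zero]
  rw [hm]
  by_cases hij : i = j
  · rw [if_pos hij] at hk ⊢
    linarith
  · rw [if_neg hij] at hk ⊢
    linarith

lemma QMat_poly (hnonneg : ∀ a b, 0 ≤ ε a b) (hdiag : ∀ a, ε a a = 0) (k : ℕ) :
    QMat ε k = ∑ i ∈ Finset.range (k + 1), sigmaW ε (k - i) • (-(kirchhoff ε)) ^ i := by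
  induction k with
  | zero => simp [QMat_zero, sigmaW_zero]
  | succ k ih =>
      rw [QMat_recurrence hnonneg hdiag k, ih, Finset.sum_range_succ' _ (k + 1)]
      rw [sub_eq_add_neg, ← neg_mul, Finset.mul_sum]
      have : ∀ i, (-(kirchhoff ε)) * (sigmaW ε (k - i) • (-(kirchhoff ε)) ^ i)
          = sigmaW ε (k + 1 - (i + 1)) • (-(kirchhoff ε)) ^ (i + 1) := by
        intro i
        rw [mul_smul_comm, ← pow_succ']
        congr 2
        omega
      simp_rw [this]
      rw [add_comm]
      congr 1

end Final

/-- `p(λ) = λ·Σ_{i=0}^{n−v} σ_{n−v−i}(−λ)^i` annihilates `L`: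
`L·Σ_{i=0}^{n−v} σ_{n−v−i}·(−L)^i = 0`. -/
theorem annihilating_polynomial_of_kirchhoff (n : ℕ) (hn : 1 < n)
    (ε : Fin n → Fin n → ℝ)
    (hnonneg : ∀ i j, 0 ≤ ε i j) (hdiag : ∀ i, ε i i = 0) :
    kirchhoff ε *
      ∑ i ∈ Finset.range (maxForestCard ε + 1),
        sigmaW ε (maxForestCard ε - i) • (-(kirchhoff ε)) ^ i = 0 := by
  classical
  rw [← QMat_poly hnonneg hdiag (maxForestCard ε)]
  have hQ : QMat ε (maxForestCard ε + 1) = 0 := by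
    ext i j
    rw [QMat_eq, Bk_eq_empty (Nat.lt_succ_self _), Finset.sum_empty, Matrix.zero_apply]
  have hs : sigmaW ε (maxForestCard ε + 1) = 0 := by
    rw [sigmaW_eq, Fk_eq_empty (Nat.lt_succ_self _), Finset.sum_empty]
  have hr := QMat_recurrence (ε := ε) hnonneg hdiag (maxForestCard ε)
  rw [hQ, hs, zero_smul, zero_sub] at hr
  exact neg_eq_zero.mp hr.symm
end
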